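/- arXiv:0901.1625 — 6 statements merged into one kernel-verified Lean document; each statement's English description precedes it below -/
import Mathlib

section
/- Let f ∈ F_q^0 and R ⊆ V. Then the mean ⟨f(σ)^R⟩ taken with respect to the Potts measure π is a real number and satisfies ⟨f(σ)^R⟩ ≥ 0. -/
open Finset

noncomputable section

variable {V : Type*} [Fintype V] [DecidableEq V]

/-- Kronecker delta `δ_{σ_x,σ_y}` for an unordered edge. -/
def edgeDelta {q : ℕ} (σ : V → Fin q) : Sym2 V → ℝ :=
  Sym2.lift ⟨fun x y => if σ x = σ y then 1 else 0,
    fun x y => by simp [eq_comm]⟩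

/-- Boltzmann weight of a spin configuration for the `q`-state Potts model with
couplings `J` on the edge set `E` and external field `h`. -/
def pottsWeight (q : ℕ) [NeZero q] (E : Finset (Sym2 V)) (J : Sym2 V → ℝ)
    (h : V → ℝ) (σ : V → Fin q) : ℝ :=
  Real.exp ((∑ e ∈ E, J e * edgeDelta σ e) +
    ∑ v : V, h v * (if σ v = 0 then 1 else 0))

/-- The partition function `Z`. -/
def pottsZ (q : ℕ) [NeZero q] (E : Finset (Sym2 V)) (J : Sym2 V → ℝ) (h : V → ℝ) : ℝ :=
  ∑ σ : V → Fin q, pottsWeight q E J h σ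

/-- The Potts probability measure `π`. -/
def pottsPMF (q : ℕ) [NeZero q] (E : Finset (Sym2 V)) (J : Sym2 V → ℝ) (h : V → ℝ)
    (σ : V → Fin q) : ℝ :=
  pottsWeight q E J h σ / pottsZ q E J h

/-- The mean `⟨f(σ)^R⟩ = Σ_σ π(σ) Π_{v ∈ R} f(σ_v)`. -/
def pottsMean (q : ℕ) [NeZero q] (E : Finset (Sym2 V)) (J : Sym2 V → ℝ) (h : V → ℝ)
    (f : Fin q → ℂ) (R : Finset V) : ℂ :=
  ∑ σ : V → Fin q, (pottsPMF q E J h σ : ℂ) * ∏ v ∈ R, f (σ v)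

/-- The mean `⟨f₀(σ)^R f₁(σ)^S⟩`. -/
def pottsMean2 (q : ℕ) [NeZero q] (E : Finset (Sym2 V)) (J : Sym2 V → ℝ) (h : V → ℝ)
    (f₀ f₁ : Fin q → ℂ) (R S : Finset V) : ℂ :=
  ∑ σ : V → Fin q, (pottsPMF q E J h σ : ℂ) *
    ((∏ v ∈ R, f₀ (σ v)) * ∏ v ∈ S, f₁ (σ v))

/-- `E(f(X)^m)` where `X` is uniformly distributed on `Fin q`. -/
def powerMean (q : ℕ) (f : Fin q → ℂ) (m : ℕ) : ℂ :=
  (∑ x : Fin q, f x ^ m) / q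

/-- The class `F_q`: all `f : Fin q → ℂ` such that every `E(f(X)^m)` is real and
nonnegative and `E(f(X)^{m+n}) ≥ E(f(X)^m)·E(f(X)^n)`. -/
def memF (q : ℕ) (f : Fin q → ℂ) : Prop :=
  (∀ m : ℕ, (powerMean q f m).im = 0 ∧ 0 ≤ (powerMean q f m).re) ∧
  ∀ m n : ℕ, (powerMean q f m).re * (powerMean q f n).re ≤ (powerMean q f (m + n)).re

/-- The class `F_q^0`: members of `F_q` with `f(0) = max{|f(x)| : x ∈ Q}`. -/
def memF0 (q : ℕ) [NeZero q] (f : Fin q → ℂ) : Prop :=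
  memF q f ∧ f 0 = (‖f 0‖ : ℂ) ∧
    ∀ x : Fin q, ‖f x‖ ≤ ‖f 0‖

/-!
Expanding each edge factor as `e^{J δ} = 1 + (e^J - 1) δ` (Fortuin–Kasteleyn) writes the
unnormalised mean as a sum over edge sets `A ⊆ E`, with coefficients `∏_{e ∈ A} (e^{J_e} - 1) ≥ 0`,
of spin sums restricted to configurations constant on the clusters of `A`. Such a sum factorises
over the clusters, and a cluster `C` contributes `Σ_x a^{[x = 0]} f(x)^b` with `a = e^{Σ_C h} ≥ 1`
and `b = |C ∩ R|`. This equals `q E(f(X)^b) + (a - 1) f(0)^b`, which is nonnegative for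
`f ∈ F_q^0`. Nonnegativity is expressed through the order on `ℂ` (`ComplexOrder`), in which
`0 ≤ z` means that `z` is a nonnegative real.
-/

open scoped ComplexOrder

lemma sum_prod_comp_eq_prod_sum_fiberwise {α C Q M : Type*} [Fintype α] [Fintype C]
    [DecidableEq C] [Fintype Q] [CommSemiring M] (p : α → C) (g : α → Q → M) :
    ∑ τ : C → Q, ∏ a, g a (τ (p a)) = ∏ c, ∑ x, ∏ a with p a = c, g a x := by
  rw [Fintype.prod_sum]
  refine Finset.sum_congr rfl fun τ _ => ?_
  rw [← Finset.prod_fiberwise univ p]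
  refine Finset.prod_congr rfl fun c _ => Finset.prod_congr rfl fun a ha => ?_
  rw [(mem_filter.1 ha).2]

lemma edgeDelta_eq_zero_or_eq_one {α : Type*} {q : ℕ} (σ : α → Fin q) (e : Sym2 α) :
    edgeDelta σ e = 0 ∨ edgeDelta σ e = 1 := by
  induction e using Sym2.ind with
  | _ x y => simp only [edgeDelta, Sym2.lift_mk]; split_ifs <;> simp

/-- The clusters of `A` are modelled as `Quot` by the edge relation: functions on it are exactly
the configurations constant along every edge of `A`. -/
lemma sum_prod_edgeDelta_smul_eq_sum_quot {α M : Type*} [Fintype α] [DecidableEq α]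
    [AddCommMonoid M] [Module ℝ M] {q : ℕ} (A : Finset (Sym2 α))
    [Fintype (Quot fun x y => s(x, y) ∈ A)]
    [DecidableEq (Quot fun x y => s(x, y) ∈ A)] (F : (α → Fin q) → M) :
    ∑ σ, (∏ e ∈ A, edgeDelta σ e) • F σ
      = ∑ τ : Quot (fun x y => s(x, y) ∈ A) → Fin q, F fun v => τ (Quot.mk _ v) := by
  classical
  have hprod : ∀ σ : α → Fin q,
      ∏ e ∈ A, edgeDelta σ e = if ∀ x y, s(x, y) ∈ A → σ x = σ y then 1 else 0 := by
    intro σ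
    split_ifs with hσ
    · refine Finset.prod_eq_one fun e he => ?_
      induction e using Sym2.ind with
      | _ x y => simp [edgeDelta, hσ x y he]
    · push Not at hσ
      obtain ⟨x, y, hxy, hne⟩ := hσ
      exact Finset.prod_eq_zero hxy (by simp [edgeDelta, hne])
  calc ∑ σ, (∏ e ∈ A, edgeDelta σ e) • F σ = ∑ σ with ∀ x y, s(x, y) ∈ A → σ x = σ y, F σ := by
        simp only [Finset.sum_filter, hprod, ite_smul, one_smul, zero_smul]
    _ = _ := by
        refine Finset.sum_bij' (fun σ hσ => Quot.lift σ (mem_filter.1 hσ).2)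
          (fun τ _ => fun v => τ (Quot.mk _ v)) (fun _ _ => mem_univ _) (fun τ _ => ?_)
          (fun _ _ => rfl) (fun τ _ => funext fun c => by induction c using Quot.ind; rfl)
          (fun _ _ => rfl)
        exact mem_filter.2 ⟨mem_univ _, fun _ _ hxy => congrArg τ (Quot.sound hxy)⟩

def clusterWeights {q : ℕ} [NeZero q] (f : Fin q → ℂ) : Submonoid (Fin q → ℂ) where
  carrier := {φ | ∃ a : ℝ, 1 ≤ a ∧ ∃ b : ℕ, φ = fun x => (if x = 0 then (a : ℂ) else 1) * f x ^ b}
  mul_mem' := by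
    rintro _ _ ⟨a, ha, b, rfl⟩ ⟨a', ha', b', rfl⟩
    refine ⟨a * a', one_le_mul_of_one_le_of_one_le ha ha', b + b', funext fun x => ?_⟩
    simp only [Pi.mul_apply]
    split_ifs <;> push_cast <;> ring
  one_mem' := ⟨1, le_rfl, 0, funext fun x => by simp⟩

lemma sum_nonneg_of_mem_clusterWeights {q : ℕ} [NeZero q] {f : Fin q → ℂ} (hf : memF0 q f)
    {φ : Fin q → ℂ} (hφ : φ ∈ clusterWeights f) : 0 ≤ ∑ x, φ x := by
  obtain ⟨a, ha, b, rfl⟩ := hφ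
  have hsplit : ∑ x, (if x = 0 then (a : ℂ) else 1) * f x ^ b
      = q * powerMean q f b + ((a - 1 : ℝ) : ℂ) * f 0 ^ b := by
    have hq : (q : ℂ) ≠ 0 := Nat.cast_ne_zero.2 (NeZero.ne q)
    have hite : ∀ x : Fin q, (if x = 0 then (a : ℂ) else 1)
        = 1 + if x = 0 then ((a - 1 : ℝ) : ℂ) else 0 := by
      intro x; split_ifs <;> push_cast <;> ring
    simp only [hite, add_mul, one_mul, ite_mul, zero_mul, Finset.sum_add_distrib,
      Finset.sum_ite_eq', mem_univ, if_true, powerMean, mul_div_cancel₀ _ hq]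
  obtain ⟨hmean_im, hmean_re⟩ := hf.1.1 b
  rw [hsplit, hf.2.1, ← Complex.ofReal_pow]
  refine add_nonneg (mul_nonneg (Nat.cast_nonneg q) ?_) (mul_nonneg ?_ ?_)
  · exact Complex.nonneg_iff.2 ⟨hmean_re, hmean_im.symm⟩
  · exact Complex.zero_le_real.2 (by linarith)
  · exact Complex.zero_le_real.2 (by positivity)

lemma sum_prod_edgeDelta_smul_prod_nonneg {α : Type*} [Fintype α] [DecidableEq α] {q : ℕ} [NeZero q]
    {f : Fin q → ℂ} (hf : memF0 q f) (A : Finset (Sym2 α)) {g : α → Fin q → ℂ}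
    (hg : ∀ v, g v ∈ clusterWeights f) :
    0 ≤ ∑ σ : α → Fin q, (∏ e ∈ A, edgeDelta σ e) • ∏ v, g v (σ v) := by
  classical
  have := Fintype.ofFinite (Quot fun x y => s(x, y) ∈ A)
  rw [sum_prod_edgeDelta_smul_eq_sum_quot, sum_prod_comp_eq_prod_sum_fiberwise]
  exact Finset.prod_nonneg fun c _ =>
    sum_nonneg_of_mem_clusterWeights hf (Finset.prod_fn _ g ▸ prod_mem fun v _ => hg v)

def vertexWeight {α : Type*} [DecidableEq α] {q : ℕ} [NeZero q] (h : α → ℝ) (f : Fin q → ℂ)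
    (R : Finset α) (v : α) (x : Fin q) : ℂ :=
  (if x = 0 then (Real.exp (h v) : ℂ) else 1) * if v ∈ R then f x else 1

lemma vertexWeight_mem_clusterWeights {α : Type*} [DecidableEq α] {q : ℕ} [NeZero q]
    {h : α → ℝ} (f : Fin q → ℂ) (R : Finset α) {v : α} (hv : 0 ≤ h v) :
    vertexWeight h f R v ∈ clusterWeights f := by
  refine ⟨Real.exp (h v), Real.one_le_exp hv, if v ∈ R then 1 else 0, funext fun x => ?_⟩
  simp only [vertexWeight]
  split_ifs <;> simp

lemma pottsWeight_mul_prod_eq (q : ℕ) [NeZero q] (E : Finset (Sym2 V)) (J : Sym2 V → ℝ)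
    (h : V → ℝ) (f : Fin q → ℂ) (R : Finset V) (σ : V → Fin q) :
    (pottsWeight q E J h σ : ℂ) * ∏ v ∈ R, f (σ v)
      = (∏ e ∈ E, (1 + (Real.exp (J e) - 1) * edgeDelta σ e)) •
          ∏ v, vertexWeight h f R v (σ v) := by
  have hedge : ∀ e, Real.exp (J e * edgeDelta σ e) = 1 + (Real.exp (J e) - 1) * edgeDelta σ e := by
    intro e
    rcases edgeDelta_eq_zero_or_eq_one σ e with h0 | h0 <;> simp [h0]
  have hfield : ∀ v, (Real.exp (h v * if σ v = 0 then 1 else 0) : ℂ)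
      = if σ v = 0 then (Real.exp (h v) : ℂ) else 1 := by
    intro v
    split_ifs <;> simp
  rw [pottsWeight, Real.exp_add, Real.exp_sum, Real.exp_sum, Complex.real_smul,
    Complex.ofReal_mul, mul_assoc, ← Fintype.prod_ite_mem R fun v => f (σ v)]
  simp only [hedge, Complex.ofReal_prod, hfield, vertexWeight, Finset.prod_mul_distrib]

lemma sum_pottsWeight_mul_prod_nonneg {q : ℕ} [NeZero q] {E : Finset (Sym2 V)} {J : Sym2 V → ℝ}
    (hJ : ∀ e ∈ E, 0 ≤ J e) {h : V → ℝ} (hh : ∀ v, 0 ≤ h v) {f : Fin q → ℂ} (hf : memF0 q f)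
    (R : Finset V) :
    0 ≤ ∑ σ, (pottsWeight q E J h σ : ℂ) * ∏ v ∈ R, f (σ v) := by
  simp_rw [pottsWeight_mul_prod_eq, Finset.prod_one_add, Finset.sum_smul]
  rw [Finset.sum_comm]
  refine Finset.sum_nonneg fun A hA => ?_
  simp_rw [Finset.prod_mul_distrib, mul_smul]
  rw [← Finset.smul_sum]
  refine smul_nonneg (Finset.prod_nonneg fun e he => ?_) (sum_prod_edgeDelta_smul_prod_nonneg hf A
    fun v => vertexWeight_mem_clusterWeights f R (hh v))
  exact sub_nonneg.2 (Real.one_le_exp (hJ e (Finset.mem_powerset.1 hA he)))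

theorem pottsMean_real_nonneg_general
    (q : ℕ) [NeZero q]
    (E : Finset (Sym2 V))
    (J : Sym2 V → ℝ) (hJ : ∀ e ∈ E, 0 ≤ J e)
    (h : V → ℝ) (hh : ∀ v : V, 0 ≤ h v)
    (f : Fin q → ℂ) (hf : memF0 q f) (R : Finset V) :
    (pottsMean q E J h f R).im = 0 ∧ 0 ≤ (pottsMean q E J h f R).re := by
  have hZ : 0 < pottsZ q E J h := Finset.sum_pos (fun σ _ => Real.exp_pos _) univ_nonempty
  have hmean : pottsMean q E J h f R
      = ((pottsZ q E J h)⁻¹ : ℝ) * ∑ σ, (pottsWeight q E J h σ : ℂ) * ∏ v ∈ R, f (σ v) := by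
    simp only [pottsMean, pottsPMF, Finset.mul_sum, div_eq_inv_mul, Complex.ofReal_mul, mul_assoc]
  have hnonneg : 0 ≤ pottsMean q E J h f R := hmean ▸ mul_nonneg
    (Complex.zero_le_real.2 (inv_nonneg.2 hZ.le)) (sum_pottsWeight_mul_prod_nonneg hJ hh hf R)
  obtain ⟨hre, him⟩ := Complex.nonneg_iff.1 hnonneg
  exact ⟨him.symm, hre⟩

/-- For `f ∈ F_q^0` and `R ⊆ V`, the Potts mean `⟨f(σ)^R⟩` is a real number
and satisfies `⟨f(σ)^R⟩ ≥ 0`. -/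
theorem pottsMean_real_nonneg
    (q : ℕ) [NeZero q] (hq : 2 ≤ q)
    (E : Finset (Sym2 V)) (hE : ∀ e ∈ E, ¬ e.IsDiag)
    (J : Sym2 V → ℝ) (hJ : ∀ e ∈ E, 0 ≤ J e)
    (h : V → ℝ) (hh : ∀ v : V, 0 ≤ h v)
    (f : Fin q → ℂ) (hf : memF0 q f) (R : Finset V) :
    (pottsMean q E J h f R).im = 0 ∧ 0 ≤ (pottsMean q E J h f R).re :=
  pottsMean_real_nonneg_general q E J hJ h hh f hf R
end
end

section
/- Let f ∈ F_q^0 and R ⊆ V. Then the (real-valued) mean ⟨f(σ)^R⟩ is non-decreasing in the coupling vectors J and h: if J_e ≤ J'_e for every e ∈ E and h_v ≤ h'_v for every v ∈ V, then ⟨f(σ)^R⟩ computed with the Potts measure with parameters (J,h) is at most ⟨f(σ)^R⟩ computed with the Potts measure with parameters (J',h'). -/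
open Finset

noncomputable section

variable {V : Type*} [Fintype V] [DecidableEq V]

/-!
Random-cluster (Edwards–Sokal) expansion, the field acting as bonds to a ghost spin fixed at `0`.
Expanding `exp (t δ) = 1 + (exp t - 1) δ` over bonds `A ⊆ E` and ghost bonds `B ⊆ V`, and summing
out `σ` cluster by cluster, writes `⟨f(σ)^R⟩` as the average of
`φ(A, B) = ∏_K (E f(X)^{|K ∩ R|} if K ∩ B = ∅, else f(0)^{|K ∩ R|})`
against the weights `∏_{e ∈ A} (exp J_e - 1) ∏_{v ∈ B} (exp h_v - 1) q ^ #{clusters missing B}`.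

For `f ∈ F_q^0` the function `φ` is increasing: merging clusters multiplies moments into a larger
moment (`E f^m · E f^n ≤ E f^{m+n}`), and pinning a cluster replaces `E f^m` by `f(0)^m ≥ E f^m`.
The weights at `(J, h)` and `(J', h')` satisfy Holley's lattice condition: the products because
`J ≤ J'` and `h ≤ h'`, and `q ^ #{clusters missing B}` because it is the order of the subgroup of
compatible spin configurations, while `|H| |K| = |H + K| |H ∩ K|` for subgroups. Holley's
inequality then compares the two averages of `φ`.
-/

section HolleyCondition

variable {α : Type*}

def HolleyCondition [Lattice α] (f g : α → ℝ) : Prop :=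
  ∀ a b, f a * g b ≤ f (a ⊓ b) * g (a ⊔ b)

theorem HolleyCondition.mul [Lattice α] {f₁ g₁ f₂ g₂ : α → ℝ} (hf₁ : 0 ≤ f₁) (hg₁ : 0 ≤ g₁)
    (hf₂ : 0 ≤ f₂) (hg₂ : 0 ≤ g₂) (h₁ : HolleyCondition f₁ g₁) (h₂ : HolleyCondition f₂ g₂) :
    HolleyCondition (f₁ * f₂) (g₁ * g₂) := fun a b =>
  calc f₁ a * f₂ a * (g₁ b * g₂ b) = (f₁ a * g₁ b) * (f₂ a * g₂ b) := by ring
    _ ≤ (f₁ (a ⊓ b) * g₁ (a ⊔ b)) * (f₂ (a ⊓ b) * g₂ (a ⊔ b)) :=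
      mul_le_mul (h₁ a b) (h₂ a b) (mul_nonneg (hf₂ a) (hg₂ b))
        (mul_nonneg (hf₁ _) (hg₁ _))
    _ = f₁ (a ⊓ b) * f₂ (a ⊓ b) * (g₁ (a ⊔ b) * g₂ (a ⊔ b)) := by ring

theorem holleyCondition_prod [DecidableEq α] {w w' : α → ℝ} (hw : 0 ≤ w) (hww' : w ≤ w') :
    HolleyCondition (fun s : Finset α => ∏ i ∈ s, w i) (fun s => ∏ i ∈ s, w' i) := by
  intro s t
  have hw' : 0 ≤ w' := hw.trans hww'
  calc (∏ i ∈ s, w i) * ∏ i ∈ t, w' i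
      = (∏ i ∈ s ∩ t, w i) * ((∏ i ∈ s \ t, w i) * ∏ i ∈ t, w' i) := by
        rw [← mul_assoc, prod_inter_mul_prod_sdiff]
    _ ≤ (∏ i ∈ s ∩ t, w i) * ((∏ i ∈ s \ t, w' i) * ∏ i ∈ t, w' i) := by
        gcongr with i
        · exact prod_nonneg fun i _ => hw i
        · exact prod_nonneg fun i _ => hw' i
        · exact fun i _ => hw i
        · exact hww' i
    _ = (∏ i ∈ s ⊓ t, w i) * ∏ i ∈ s ⊔ t, w' i := by
        rw [← prod_union sdiff_disjoint, sdiff_union_self_eq_union]; rfl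

theorem holley_div [DistribLattice α] [Fintype α] {φ μ₁ μ₂ : α → ℝ} (hφ₀ : 0 ≤ φ)
    (hφ : Monotone φ) (hμ₁ : 0 ≤ μ₁) (hμ₂ : 0 ≤ μ₂) (h : HolleyCondition μ₁ μ₂)
    (h₁ : 0 < ∑ a, μ₁ a) (h₂ : 0 < ∑ a, μ₂ a) :
    (∑ a, φ a * μ₁ a) / ∑ a, μ₁ a ≤ (∑ a, φ a * μ₂ a) / ∑ a, μ₂ a := by
  set Z₁ := ∑ a, μ₁ a
  set Z₂ := ∑ a, μ₂ a
  have key := holley (μ := φ) (f := fun a => Z₂ * μ₁ a) (g := fun a => Z₁ * μ₂ a) hφ₀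
    (fun a => mul_nonneg h₂.le (hμ₁ a)) (fun a => mul_nonneg h₁.le (hμ₂ a)) hφ
    (by simp only [← mul_sum]; exact mul_comm _ _)
    (fun a b => by
      rw [mul_mul_mul_comm, mul_mul_mul_comm _ (μ₁ _)]
      exact mul_le_mul_of_nonneg_left (h a b) (mul_nonneg h₂.le h₁.le))
  simp only [mul_left_comm (φ _), ← mul_sum] at key
  rw [div_le_div_iff₀ h₁ h₂]
  linarith

end HolleyCondition

theorem AddSubgroup.card_mul_card_eq_card_sup_mul_card_inf {G : Type*} [AddGroup G]
    (H K : AddSubgroup G) [K.Normal] :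
    Nat.card H * Nat.card K = Nat.card ↥(H ⊔ K) * Nat.card ↥(H ⊓ K) := by
  have hH : Nat.card ↥(H ⊓ K) * K.relIndex H = Nat.card H := by
    rw [← inf_relIndex_left, ← relIndex_bot_left, ← relIndex_bot_left,
      relIndex_mul_relIndex _ _ _ bot_le inf_le_left]
  have hK : Nat.card K * K.relIndex H = Nat.card ↥(H ⊔ K) := by
    rw [← relIndex_sup_right, ← relIndex_bot_left, ← relIndex_bot_left,
      relIndex_mul_relIndex _ _ _ bot_le le_sup_right]
  rw [← hH, ← hK]
  ring

theorem holleyCondition_card_addSubgroup {α G : Type*} [Lattice α] [AddCommGroup G] [Finite G]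
    {H : α → AddSubgroup G} (hH : Antitone H) (hsup : ∀ a b, H (a ⊔ b) = H a ⊓ H b) :
    HolleyCondition (fun a => (Nat.card (H a) : ℝ)) (fun a => (Nat.card (H a) : ℝ)) := by
  intro a b
  have hle : H a ⊔ H b ≤ H (a ⊓ b) := sup_le (hH inf_le_left) (hH inf_le_right)
  have key : Nat.card (H a) * Nat.card (H b) ≤ Nat.card (H (a ⊓ b)) * Nat.card (H (a ⊔ b)) := by
    rw [AddSubgroup.card_mul_card_eq_card_sup_mul_card_inf, hsup]
    exact Nat.mul_le_mul_right _ (AddSubgroup.card_le_of_le hle)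
  dsimp only
  exact_mod_cast key

theorem SimpleGraph.exists_eq_comp_connectedComponentMk_iff {W β : Type*} (G : SimpleGraph W)
    (f : W → β) :
    (∃ τ : G.ConnectedComponent → β, f = τ ∘ G.connectedComponentMk) ↔
      ∀ x y, G.Adj x y → f x = f y := by
  refine ⟨fun ⟨τ, hτ⟩ x y hxy => ?_, fun h => ?_⟩
  · rw [hτ, Function.comp_apply, Function.comp_apply, ConnectedComponent.sound hxy.reachable]
  · have hwalk : ∀ {v w} (p : G.Walk v w), f v = f w := by
      intro v w p
      induction p with
      | nil => rfl
      | cons hadj _ ih => exact (h _ _ hadj).trans ih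
    exact ⟨ConnectedComponent.lift f fun _ _ p _ => hwalk p, rfl⟩

theorem Finset.prod_comp_eq_prod_pow_card {ι κ M : Type*} [Fintype κ] [DecidableEq κ]
    [CommMonoid M] (s : Finset ι) (π : ι → κ) (f : κ → M) :
    ∏ i ∈ s, f (π i) = ∏ k, f k ^ #{i ∈ s | π i = k} := by
  rw [← prod_fiberwise s π]
  exact prod_congr rfl fun k _ => prod_eq_pow_card fun i hi => by rw [(mem_filter.1 hi).2]

theorem Finset.prod_apply_le_apply_sum {ι : Type*} {a : ℕ → ℝ} (ha₀ : ∀ m, 0 ≤ a m)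
    (ha : ∀ m n, a m * a n ≤ a (m + n)) {t : Finset ι} (ht : t.Nonempty) (m : ι → ℕ) :
    ∏ i ∈ t, a (m i) ≤ a (∑ i ∈ t, m i) := by
  induction ht using Finset.Nonempty.cons_induction with
  | singleton i => simp
  | cons i t hi _ ih =>
    rw [prod_cons, sum_cons]
    exact (mul_le_mul_of_nonneg_left ih (ha₀ _)).trans (ha _ _)

theorem re_powerMean_le_pow {q : ℕ} [NeZero q] {f : Fin q → ℂ} {c : ℝ} (hf : ∀ x, ‖f x‖ ≤ c)
    (m : ℕ) : (powerMean q f m).re ≤ c ^ m := by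
  have hq : (0 : ℝ) < q := Nat.cast_pos.2 (Nat.pos_of_neZero q)
  calc (powerMean q f m).re ≤ ‖powerMean q f m‖ := Complex.re_le_norm _
    _ = ‖∑ x, f x ^ m‖ / q := by rw [powerMean, norm_div, Complex.norm_natCast]
    _ ≤ (∑ _x : Fin q, c ^ m) / q := by
        gcongr
        refine (norm_sum_le _ _).trans (sum_le_sum fun x _ => ?_)
        rw [norm_pow]
        exact pow_le_pow_left₀ (norm_nonneg _) (hf x) m
    _ = c ^ m := by
        rw [sum_const, card_univ, Fintype.card_fin, nsmul_eq_mul, mul_div_cancel_left₀ _ hq.ne']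

namespace Potts

open scoped Classical

-- Shadows the ambient `V`, whose instance arguments would otherwise be attached to every lemma.
variable {V : Type*} {q : ℕ}

theorem edgeDelta_eq_ite (σ : V → Fin q) (e : Sym2 V) :
    edgeDelta σ e = if (e.map σ).IsDiag then 1 else 0 := by
  induction e using Sym2.ind with
  | _ x y => simp [edgeDelta]

theorem forall_isDiag_map_iff {β : Type*} (σ : V → β) (A : Finset (Sym2 V)) :
    (∀ e ∈ A, (e.map σ).IsDiag) ↔ ∀ x y, s(x, y) ∈ A → σ x = σ y := by
  simp [Sym2.forall]

section CompatibleSpins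

-- `p.1` is a set of bonds and `p.2` a set of ghost bonds, joining vertices to a ghost spin `0`.
def compatibleSpins (q : ℕ) [NeZero q] (p : Finset (Sym2 V) × Finset V) :
    AddSubgroup (V → Fin q) where
  carrier := {σ | (∀ x y, s(x, y) ∈ p.1 → σ x = σ y) ∧ ∀ v ∈ p.2, σ v = 0}
  zero_mem' := ⟨fun _ _ _ => rfl, fun _ _ => rfl⟩
  add_mem' := fun ⟨hσA, hσB⟩ ⟨hτA, hτB⟩ =>
    ⟨fun x y hxy => by simp [hσA x y hxy, hτA x y hxy], fun v hv => by simp [hσB v hv, hτB v hv]⟩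
  neg_mem' := fun ⟨hσA, hσB⟩ =>
    ⟨fun x y hxy => by simp [hσA x y hxy], fun v hv => by simp [hσB v hv]⟩

variable [NeZero q]

theorem mem_compatibleSpins {p : Finset (Sym2 V) × Finset V} {σ : V → Fin q} :
    σ ∈ compatibleSpins q p ↔ (∀ x y, s(x, y) ∈ p.1 → σ x = σ y) ∧ ∀ v ∈ p.2, σ v = 0 :=
  Iff.rfl

theorem compatibleSpins_antitone : Antitone (compatibleSpins (V := V) q) :=
  fun _ _ ⟨hA, hB⟩ _ ⟨hσA, hσB⟩ => ⟨fun x y hxy => hσA x y (hA hxy), fun v hv => hσB v (hB hv)⟩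

variable [DecidableEq V]

theorem compatibleSpins_sup (a b : Finset (Sym2 V) × Finset V) :
    compatibleSpins q (a ⊔ b) = compatibleSpins q a ⊓ compatibleSpins q b := by
  ext σ
  simp only [AddSubgroup.mem_inf, mem_compatibleSpins, Prod.fst_sup, Prod.snd_sup,
    Finset.sup_eq_union, Finset.mem_union]
  grind

variable [Fintype V]

theorem natCard_compatibleSpins (p : Finset (Sym2 V) × Finset V) :
    Nat.card (compatibleSpins q p) = #{σ | σ ∈ compatibleSpins q p} := by
  rw [Nat.card_eq_fintype_card, Fintype.card_subtype]

theorem prod_edgeDelta_mul_prod_ite (σ : V → Fin q) (p : Finset (Sym2 V) × Finset V) :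
    (∏ e ∈ p.1, edgeDelta σ e) * ∏ v ∈ p.2, (if σ v = 0 then (1 : ℝ) else 0) =
      if σ ∈ compatibleSpins q p then 1 else 0 := by
  simp only [edgeDelta_eq_ite, prod_boole, ite_zero_mul_ite_zero, mul_one, forall_isDiag_map_iff,
    mem_compatibleSpins]

end CompatibleSpins

section Clusters

abbrev Cluster (A : Finset (Sym2 V)) : Type _ :=
  (SimpleGraph.fromEdgeSet (A : Set (Sym2 V))).ConnectedComponent

def clusterOf (A : Finset (Sym2 V)) : V → Cluster A :=
  (SimpleGraph.fromEdgeSet (A : Set (Sym2 V))).connectedComponentMk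

def clusterCount (A : Finset (Sym2 V)) (R : Finset V) (K : Cluster A) : ℕ :=
  #{v ∈ R | clusterOf A v = K}

theorem clusterOf_surjective (A : Finset (Sym2 V)) : Function.Surjective (clusterOf A) :=
  Quot.mk_surjective

theorem exists_eq_comp_clusterOf_iff {β : Type*} (A : Finset (Sym2 V)) (σ : V → β) :
    (∃ τ : Cluster A → β, σ = τ ∘ clusterOf A) ↔ ∀ x y, s(x, y) ∈ A → σ x = σ y := by
  rw [clusterOf, SimpleGraph.exists_eq_comp_connectedComponentMk_iff]
  refine ⟨fun h x y hxy => ?_, fun h x y hxy => h x y (SimpleGraph.fromEdgeSet_adj _ |>.1 hxy).1⟩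
  by_cases hne : x = y
  · rw [hne]
  · exact h x y ((SimpleGraph.fromEdgeSet_adj _).2 ⟨hxy, hne⟩)

def clusterMap {A A' : Finset (Sym2 V)} (hA : A ⊆ A') : Cluster A → Cluster A' :=
  SimpleGraph.ConnectedComponent.map
    (SimpleGraph.Hom.ofLE (SimpleGraph.fromEdgeSet_mono (Finset.coe_subset.2 hA)))

theorem clusterMap_clusterOf {A A' : Finset (Sym2 V)} (hA : A ⊆ A') (v : V) :
    clusterMap hA (clusterOf A v) = clusterOf A' v :=
  rfl

theorem clusterMap_surjective {A A' : Finset (Sym2 V)} (hA : A ⊆ A') :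
    Function.Surjective (clusterMap hA) :=
  SimpleGraph.ConnectedComponent.surjective_map_ofLE _

variable [Fintype V] [DecidableEq V]

theorem clusterCount_eq_sum {A A' : Finset (Sym2 V)} (hA : A ⊆ A') (R : Finset V)
    (K' : Cluster A') :
    clusterCount A' R K' = ∑ K with clusterMap hA K = K', clusterCount A R K := by
  rw [clusterCount, card_eq_sum_card_fiberwise (f := clusterOf A)
    (t := {K | clusterMap hA K = K'}) fun v hv => by
      simpa [clusterMap_clusterOf] using (mem_filter.1 hv).2]
  refine sum_congr rfl fun K hK => ?_
  rw [clusterCount, filter_filter]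
  refine congrArg card (filter_congr fun v _ => ?_)
  rw [← clusterMap_clusterOf hA, ← (mem_filter.1 hK).2]
  constructor
  · exact And.right
  · intro h; exact ⟨by rw [h], h⟩

theorem clusterCount_eq_zero_of_le {A A' : Finset (Sym2 V)} {B B' : Finset V} (hA : A ⊆ A')
    (hB : B ⊆ B') {K : Cluster A} {K' : Cluster A'} (hK : clusterMap hA K = K')
    (h : clusterCount A' B' K' = 0) : clusterCount A B K = 0 := by
  have : clusterCount A B K ≤ clusterCount A' B' K' :=
    calc clusterCount A B K ≤ ∑ K₀ with clusterMap hA K₀ = K', clusterCount A B K₀ :=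
          single_le_sum (fun _ _ => Nat.zero_le _) (mem_filter.2 ⟨mem_univ _, hK⟩)
      _ = clusterCount A' B K' := (clusterCount_eq_sum hA B K').symm
      _ ≤ clusterCount A' B' K' := card_le_card (filter_subset_filter _ hB)
  omega

end Clusters

section ClusterSums

variable [NeZero q] [Fintype V] [DecidableEq V]

theorem sum_compatibleSpins {S : Type*} [AddCommMonoid S] (p : Finset (Sym2 V) × Finset V)
    (F : (V → Fin q) → S) :
    ∑ σ with σ ∈ compatibleSpins q p, F σ =
      ∑ τ : Cluster p.1 → Fin q with ∀ v ∈ p.2, τ (clusterOf p.1 v) = 0,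
        F (τ ∘ clusterOf p.1) := by
  symm
  refine sum_bij (fun τ _ => τ ∘ clusterOf p.1) (fun τ hτ => ?_)
    (fun _ _ _ _ h => (clusterOf_surjective p.1).injective_comp_right h) (fun σ hσ => ?_)
    (fun _ _ => rfl)
  · exact mem_filter.2 ⟨mem_univ _,
      (exists_eq_comp_clusterOf_iff _ _).1 ⟨τ, rfl⟩, (mem_filter.1 hτ).2⟩
  · obtain ⟨hA, hB⟩ := (mem_filter.1 hσ).2
    obtain ⟨τ, rfl⟩ := (exists_eq_comp_clusterOf_iff _ _).2 hA
    exact ⟨τ, mem_filter.2 ⟨mem_univ _, hB⟩, rfl⟩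

theorem sum_compatibleSpins_prod {S : Type*} [CommSemiring S] (g : Fin q → S)
    (p : Finset (Sym2 V) × Finset V) (R : Finset V) :
    ∑ σ with σ ∈ compatibleSpins q p, ∏ v ∈ R, g (σ v) =
      ∏ K : Cluster p.1, if clusterCount p.1 p.2 K = 0 then ∑ x, g x ^ clusterCount p.1 R K
        else g 0 ^ clusterCount p.1 R K := by
  have hsum : ∀ b m : ℕ, ∑ x : Fin q, (if x = 0 then (1 : S) else 0) ^ b * g x ^ m =
      if b = 0 then ∑ x, g x ^ m else g 0 ^ m := by
    intro b m
    rcases Nat.eq_zero_or_pos b with rfl | hb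
    · simp
    · rw [if_neg hb.ne', sum_eq_single 0 (fun x _ hx => by simp [hx, hb.ne']) (by simp)]
      simp
  calc ∑ σ with σ ∈ compatibleSpins q p, ∏ v ∈ R, g (σ v)
      = ∑ τ : Cluster p.1 → Fin q, ∏ K, (if τ K = 0 then (1 : S) else 0) ^ clusterCount p.1 p.2 K *
          g (τ K) ^ clusterCount p.1 R K := by
        rw [sum_compatibleSpins, sum_filter]
        refine sum_congr rfl fun τ _ => ?_
        simp only [prod_mul_distrib, clusterCount]
        rw [← prod_comp_eq_prod_pow_card p.2 (clusterOf p.1)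
            fun K => if τ K = 0 then (1 : S) else 0,
          ← prod_comp_eq_prod_pow_card R (clusterOf p.1) fun K => g (τ K), prod_boole, boole_mul]
        congr 1
    _ = ∏ K : Cluster p.1, ∑ x, (if x = 0 then (1 : S) else 0) ^ clusterCount p.1 p.2 K *
          g x ^ clusterCount p.1 R K := (Fintype.prod_sum fun K x =>
            (if x = 0 then (1 : S) else 0) ^ clusterCount p.1 p.2 K *
              g x ^ clusterCount p.1 R K).symm
    _ = _ := prod_congr rfl fun K _ => hsum _ _

theorem natCard_compatibleSpins_eq_prod {S : Type*} [CommSemiring S]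
    (p : Finset (Sym2 V) × Finset V) :
    (Nat.card (compatibleSpins q p) : S) =
      ∏ K : Cluster p.1, if clusterCount p.1 p.2 K = 0 then (q : S) else 1 := by
  have h := sum_compatibleSpins_prod (q := q) (fun _ => (1 : S)) p ∅
  simp only [prod_empty, sum_const, card_univ, Fintype.card_fin, nsmul_eq_mul, mul_one,
    one_pow] at h
  rw [natCard_compatibleSpins, h]

end ClusterSums

section ClusterProd

variable [Fintype V] [DecidableEq V] {a : ℕ → ℝ} {c : ℝ}

def clusterProd (a : ℕ → ℝ) (c : ℝ) (R : Finset V) (p : Finset (Sym2 V) × Finset V) : ℝ :=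
  ∏ K : Cluster p.1, if clusterCount p.1 p.2 K = 0 then a (clusterCount p.1 R K)
    else c ^ clusterCount p.1 R K

theorem clusterProd_nonneg (ha₀ : ∀ m, 0 ≤ a m) (hac : ∀ m, a m ≤ c ^ m) (R : Finset V)
    (p : Finset (Sym2 V) × Finset V) : 0 ≤ clusterProd a c R p :=
  prod_nonneg fun _ _ => by split_ifs; exacts [ha₀ _, (ha₀ _).trans (hac _)]

theorem clusterProd_monotone (ha₀ : ∀ m, 0 ≤ a m) (ha : ∀ m n, a m * a n ≤ a (m + n))
    (hac : ∀ m, a m ≤ c ^ m) (R : Finset V) : Monotone (clusterProd a c R) := by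
  rintro ⟨A, B⟩ ⟨A', B'⟩ ⟨hA, hB⟩
  have hA : A ⊆ A' := hA
  have hB : B ⊆ B' := hB
  have hfac : ∀ K, 0 ≤ if clusterCount A B K = 0 then a (clusterCount A R K)
      else c ^ clusterCount A R K := fun K => by
    split_ifs; exacts [ha₀ _, (ha₀ _).trans (hac _)]
  unfold clusterProd
  rw [← prod_fiberwise univ (clusterMap hA)]
  refine prod_le_prod (fun K' _ => prod_nonneg fun K _ => hfac K) fun K' _ => ?_
  rw [clusterCount_eq_sum hA R K']
  by_cases hK' : clusterCount A' B' K' = 0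
  · rw [if_pos hK', prod_congr rfl fun K hK =>
      if_pos (clusterCount_eq_zero_of_le hA hB (mem_filter.1 hK).2 hK')]
    obtain ⟨K, hK⟩ := clusterMap_surjective hA K'
    exact prod_apply_le_apply_sum ha₀ ha ⟨K, mem_filter.2 ⟨mem_univ _, hK⟩⟩ _
  · rw [if_neg hK', ← prod_pow_eq_pow_sum]
    refine prod_le_prod (fun K _ => hfac K) fun K _ => ?_
    split_ifs
    exacts [hac _, le_rfl]

end ClusterProd

section RandomCluster

-- Zero off `E`, so that the expansion runs over the whole lattice `Finset (Sym2 V) × Finset V`.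
def bondWeight (E : Finset (Sym2 V)) (J : Sym2 V → ℝ) (e : Sym2 V) : ℝ :=
  if e ∈ E then Real.exp (J e) - 1 else 0

theorem bondWeight_nonneg {E : Finset (Sym2 V)} {J : Sym2 V → ℝ} (hJ : ∀ e ∈ E, 0 ≤ J e) :
    0 ≤ bondWeight E J := fun e => by
  unfold bondWeight
  split_ifs with he
  exacts [sub_nonneg.2 (Real.one_le_exp (hJ e he)), le_rfl]

theorem bondWeight_mono {E : Finset (Sym2 V)} {J J' : Sym2 V → ℝ} (hJJ' : ∀ e ∈ E, J e ≤ J' e) :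
    bondWeight E J ≤ bondWeight E J' := fun e => by
  unfold bondWeight
  split_ifs with he
  exacts [sub_le_sub_right (Real.exp_le_exp.2 (hJJ' e he)) 1, le_rfl]

def clusterWeight {α β : Type*} (w : α → ℝ) (u : β → ℝ) (p : Finset α × Finset β) : ℝ :=
  (∏ e ∈ p.1, w e) * ∏ v ∈ p.2, u v

theorem clusterWeight_nonneg {α β : Type*} {w : α → ℝ} {u : β → ℝ} (hw : 0 ≤ w) (hu : 0 ≤ u) :
    0 ≤ clusterWeight w u := fun _ =>
  mul_nonneg (prod_nonneg fun e _ => hw e) (prod_nonneg fun v _ => hu v)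

theorem holleyCondition_clusterWeight {α β : Type*} [DecidableEq α] [DecidableEq β]
    {w w' : α → ℝ} {u u' : β → ℝ} (hw : 0 ≤ w) (hww' : w ≤ w') (hu : 0 ≤ u) (huu' : u ≤ u') :
    HolleyCondition (clusterWeight w u) (clusterWeight w' u') :=
  HolleyCondition.mul (α := Finset α × Finset β) (f₁ := fun p => ∏ e ∈ p.1, w e)
    (g₁ := fun p => ∏ e ∈ p.1, w' e) (f₂ := fun p => ∏ v ∈ p.2, u v)
    (g₂ := fun p => ∏ v ∈ p.2, u' v)
    (fun _ => prod_nonneg fun e _ => hw e) (fun _ => prod_nonneg fun e _ => (hw.trans hww') e)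
    (fun _ => prod_nonneg fun v _ => hu v) (fun _ => prod_nonneg fun v _ => (hu.trans huu') v)
    (fun a b => holleyCondition_prod hw hww' a.1 b.1)
    (fun a b => holleyCondition_prod hu huu' a.2 b.2)

variable [NeZero q]

def randomClusterWeight (q : ℕ) [NeZero q] (E : Finset (Sym2 V)) (J : Sym2 V → ℝ) (h : V → ℝ)
    (p : Finset (Sym2 V) × Finset V) : ℝ :=
  clusterWeight (bondWeight E J) (fun v => Real.exp (h v) - 1) p * Nat.card (compatibleSpins q p)

theorem randomClusterWeight_nonneg {E : Finset (Sym2 V)} {J : Sym2 V → ℝ} {h : V → ℝ}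
    (hJ : ∀ e ∈ E, 0 ≤ J e) (hh : ∀ v, 0 ≤ h v) : 0 ≤ randomClusterWeight q E J h := fun p =>
  mul_nonneg (clusterWeight_nonneg (bondWeight_nonneg hJ)
    (fun v => sub_nonneg.2 (Real.one_le_exp (hh v))) p) (Nat.cast_nonneg _)

theorem holleyCondition_randomClusterWeight [Fintype V] [DecidableEq V] {E : Finset (Sym2 V)}
    {J J' : Sym2 V → ℝ} {h h' : V → ℝ} (hJ : ∀ e ∈ E, 0 ≤ J e) (hh : ∀ v, 0 ≤ h v)
    (hJJ' : ∀ e ∈ E, J e ≤ J' e) (hhh' : ∀ v, h v ≤ h' v) :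
    HolleyCondition (randomClusterWeight q E J h) (randomClusterWeight q E J' h') := by
  have hw := bondWeight_nonneg hJ
  have hww' := bondWeight_mono hJJ'
  have hu : 0 ≤ fun v => Real.exp (h v) - 1 := fun v => sub_nonneg.2 (Real.one_le_exp (hh v))
  have huu' : (fun v => Real.exp (h v) - 1) ≤ fun v => Real.exp (h' v) - 1 :=
    fun v => sub_le_sub_right (Real.exp_le_exp.2 (hhh' v)) 1
  exact HolleyCondition.mul (clusterWeight_nonneg hw hu)
    (clusterWeight_nonneg (hw.trans hww') (hu.trans huu')) (fun _ => Nat.cast_nonneg _)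
    (fun _ => Nat.cast_nonneg _) (holleyCondition_clusterWeight hw hww' hu huu')
    (holleyCondition_card_addSubgroup compatibleSpins_antitone compatibleSpins_sup)

end RandomCluster

section Expansion

variable [NeZero q] [Fintype V] [DecidableEq V]

theorem pottsWeight_eq_sum (E : Finset (Sym2 V)) (J : Sym2 V → ℝ) (h : V → ℝ) (σ : V → Fin q) :
    pottsWeight q E J h σ = ∑ p, clusterWeight (bondWeight E J) (fun v => Real.exp (h v) - 1) p *
      if σ ∈ compatibleSpins q p then 1 else 0 := by
  have hexp : ∀ (t : ℝ) (P : Prop) [Decidable P],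
      Real.exp (t * if P then 1 else 0) = 1 + (Real.exp t - 1) * if P then 1 else 0 := by
    intro t P _
    split_ifs <;> simp
  have hbond : Real.exp (∑ e ∈ E, J e * edgeDelta σ e) =
      ∏ e, (1 + bondWeight E J e * edgeDelta σ e) := by
    rw [Real.exp_sum, ← prod_subset (subset_univ E) fun e _ he => by simp [bondWeight, he]]
    refine prod_congr rfl fun e he => ?_
    rw [edgeDelta_eq_ite, hexp, bondWeight, if_pos he]
  have hfield : Real.exp (∑ v, h v * if σ v = 0 then 1 else 0) =
      ∏ v, (1 + (Real.exp (h v) - 1) * if σ v = 0 then 1 else 0) := by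
    rw [Real.exp_sum]
    exact prod_congr rfl fun v _ => hexp _ _
  rw [pottsWeight, Real.exp_add, hbond, hfield, prod_one_add, prod_one_add, powerset_univ,
    powerset_univ, sum_mul_sum, ← Fintype.sum_prod_type']
  refine sum_congr rfl fun p _ => ?_
  rw [← prod_edgeDelta_mul_prod_ite, clusterWeight, prod_mul_distrib, prod_mul_distrib]
  ring

theorem pottsZ_eq_sum (E : Finset (Sym2 V)) (J : Sym2 V → ℝ) (h : V → ℝ) :
    pottsZ q E J h = ∑ p, randomClusterWeight q E J h p := by
  simp_rw [pottsZ, pottsWeight_eq_sum, randomClusterWeight]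
  rw [sum_comm]
  refine sum_congr rfl fun p _ => ?_
  rw [← mul_sum, sum_boole, natCard_compatibleSpins]

theorem sum_randomClusterWeight_pos (E : Finset (Sym2 V)) (J : Sym2 V → ℝ) (h : V → ℝ) :
    0 < ∑ p, randomClusterWeight q E J h p := by
  rw [← pottsZ_eq_sum]
  exact sum_pos (fun _ _ => Real.exp_pos _) univ_nonempty

theorem sum_compatibleSpins_prod_eq {f : Fin q → ℂ} (hre : ∀ m, (powerMean q f m).im = 0)
    (h0 : f 0 = ‖f 0‖) (p : Finset (Sym2 V) × Finset V) (R : Finset V) :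
    ∑ σ with σ ∈ compatibleSpins q p, ∏ v ∈ R, f (σ v) =
      Nat.card (compatibleSpins q p) *
        (clusterProd (fun m => (powerMean q f m).re) ‖f 0‖ R p : ℂ) := by
  rw [sum_compatibleSpins_prod, natCard_compatibleSpins_eq_prod, clusterProd, Complex.ofReal_prod,
    ← prod_mul_distrib]
  refine prod_congr rfl fun K _ => ?_
  split_ifs
  · have hq : (q : ℂ) ≠ 0 := Nat.cast_ne_zero.2 (NeZero.ne q)
    rw [← mul_div_cancel₀ (∑ x, f x ^ _) hq, ← powerMean,
      ← Complex.re_add_im (powerMean q f _), hre]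
    simp
  · rw [h0]
    simp

theorem pottsMean_re_eq {f : Fin q → ℂ} (hre : ∀ m, (powerMean q f m).im = 0)
    (h0 : f 0 = ‖f 0‖) (E : Finset (Sym2 V)) (J : Sym2 V → ℝ) (h : V → ℝ) (R : Finset V) :
    (pottsMean q E J h f R).re =
      (∑ p, clusterProd (fun m => (powerMean q f m).re) ‖f 0‖ R p * randomClusterWeight q E J h p) /
        ∑ p, randomClusterWeight q E J h p := by
  have hnum : ∑ σ, (pottsWeight q E J h σ : ℂ) * ∏ v ∈ R, f (σ v) =
      ((∑ p, clusterProd (fun m => (powerMean q f m).re) ‖f 0‖ R p *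
        randomClusterWeight q E J h p : ℝ) : ℂ) := by
    simp_rw [pottsWeight_eq_sum, Complex.ofReal_sum, sum_mul]
    rw [sum_comm]
    refine sum_congr rfl fun p _ => ?_
    calc ∑ σ, ((clusterWeight (bondWeight E J) (fun v => Real.exp (h v) - 1) p *
            if σ ∈ compatibleSpins q p then 1 else 0 : ℝ) : ℂ) * ∏ v ∈ R, f (σ v)
        = (clusterWeight (bondWeight E J) (fun v => Real.exp (h v) - 1) p : ℂ) *
            ∑ σ with σ ∈ compatibleSpins q p, ∏ v ∈ R, f (σ v) := by
          rw [mul_sum, sum_filter]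
          refine sum_congr rfl fun σ _ => ?_
          split_ifs <;> push_cast <;> ring
      _ = _ := by
          rw [sum_compatibleSpins_prod_eq hre h0, randomClusterWeight]
          push_cast
          ring
  rw [← pottsZ_eq_sum, pottsMean]
  simp_rw [pottsPMF, Complex.ofReal_div, div_mul_eq_mul_div]
  rw [← sum_div, hnum, ← Complex.ofReal_div, Complex.ofReal_re]

end Expansion

end Potts

theorem pottsMean_monotone_general
    (q : ℕ) [NeZero q]
    (E : Finset (Sym2 V))
    (J J' : Sym2 V → ℝ) (hJ : ∀ e ∈ E, 0 ≤ J e) (hJ' : ∀ e ∈ E, 0 ≤ J' e)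
    (h h' : V → ℝ) (hh : ∀ v : V, 0 ≤ h v) (hh' : ∀ v : V, 0 ≤ h' v)
    (hJJ' : ∀ e ∈ E, J e ≤ J' e) (hhh' : ∀ v : V, h v ≤ h' v)
    (f : Fin q → ℂ) (hf : memF0 q f) (R : Finset V) :
    (pottsMean q E J h f R).re ≤ (pottsMean q E J' h' f R).re := by
  obtain ⟨⟨hmoment, hsuper⟩, h0, hmax⟩ := hf
  have hre m := (hmoment m).1
  have hnonneg m := (hmoment m).2
  have hle := re_powerMean_le_pow hmax
  rw [Potts.pottsMean_re_eq hre h0, Potts.pottsMean_re_eq hre h0]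
  exact holley_div (Potts.clusterProd_nonneg hnonneg hle R)
    (Potts.clusterProd_monotone hnonneg hsuper hle R)
    (Potts.randomClusterWeight_nonneg hJ hh) (Potts.randomClusterWeight_nonneg hJ' hh')
    (Potts.holleyCondition_randomClusterWeight hJ hh hJJ' hhh')
    (Potts.sum_randomClusterWeight_pos E J h) (Potts.sum_randomClusterWeight_pos E J' h')

/-- For `f ∈ F_q^0` and `R ⊆ V`, the (real-valued) Potts mean `⟨f(σ)^R⟩` is
non-decreasing in the coupling vectors `J` and `h`. -/
theorem pottsMean_monotone
    (q : ℕ) [NeZero q] (hq : 2 ≤ q)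
    (E : Finset (Sym2 V)) (hE : ∀ e ∈ E, ¬ e.IsDiag)
    (J J' : Sym2 V → ℝ) (hJ : ∀ e ∈ E, 0 ≤ J e) (hJ' : ∀ e ∈ E, 0 ≤ J' e)
    (h h' : V → ℝ) (hh : ∀ v : V, 0 ≤ h v) (hh' : ∀ v : V, 0 ≤ h' v)
    (hJJ' : ∀ e ∈ E, J e ≤ J' e) (hhh' : ∀ v : V, h v ≤ h' v)
    (f : Fin q → ℂ) (hf : memF0 q f) (R : Finset V) :
    (pottsMean q E J h f R).re ≤ (pottsMean q E J' h' f R).re :=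
  pottsMean_monotone_general q E J J' hJ hJ' h h' hh hh' hJJ' hhh' f hf R
end
end

section
/- Suppose the external field vanishes, h_v = 0 for all v ∈ V, and let f ∈ F_q (membership in F_q^0 is not required). Then for every R ⊆ V the Potts mean ⟨f(σ)^R⟩ is real and nonnegative, is non-decreasing in the coupling vector J, and for all R, S ⊆ V one has ⟨f(σ)^R f(σ)^S⟩ ≥ ⟨f(σ)^R⟩ · ⟨f(σ)^S⟩. -/
open Finset

noncomputable section

variable {V : Type*} [Fintype V] [DecidableEq V]

/-!
With zero field, `e^{J δ} = 1 + (e^J - 1) δ` for `δ ∈ {0, 1}`, and multiplying this out over the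
edges (Fortuin–Kasteleyn) turns the Potts mean of a monomial `∏_v f(σ_v)^{m_v}` into the mean,
under the random-cluster measure `φ(A) ∝ ∏_{e ∈ A} (e^{J_e} - 1) q^{k(A)}` on subsets `A ⊆ E`, of
the cluster moment `∏_C E(f(X)^{m(C)})` over the connected components `C` of `(V, A)`.
For `f ∈ F_q` the cluster moments are nonnegative, supermultiplicative in `m`, and increase when
clusters merge, i.e. are increasing in `A`. The number of components `k` is supermodular, so `φ`
satisfies the FKG lattice condition and is stochastically increasing in `J` (Holley). Hence the
means are nonnegative, increase with `J`, and the GKS inequality is the FKG inequality for two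
cluster moments.
-/

open SimpleGraph

section Components

abbrev edgeGraph (A : Finset (Sym2 V)) : SimpleGraph V := fromEdgeSet A

def numComponents (A : Finset (Sym2 V)) : ℕ := Fintype.card (edgeGraph A).ConnectedComponent

def IsEdgeConstant {α : Type*} (A : Finset (Sym2 V)) (σ : V → α) : Prop :=
  ∀ v w, s(v, w) ∈ A → σ v = σ w

variable {α : Type*} {A B : Finset (Sym2 V)} {σ : V → α}

omit [Fintype V] [DecidableEq V] in
theorem IsEdgeConstant.anti (hAB : A ⊆ B) (hσ : IsEdgeConstant B σ) : IsEdgeConstant A σ :=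
  fun v w h => hσ v w (hAB h)

omit [Fintype V] in
theorem isEdgeConstant_union :
    IsEdgeConstant (A ∪ B) σ ↔ IsEdgeConstant A σ ∧ IsEdgeConstant B σ := by
  simp only [IsEdgeConstant, Finset.mem_union]
  exact ⟨fun h => ⟨fun v w hv => h v w (.inl hv), fun v w hv => h v w (.inr hv)⟩,
    fun h v w => Or.rec (h.1 v w) (h.2 v w)⟩

omit [Fintype V] [DecidableEq V] in
theorem IsEdgeConstant.eq_of_reachable (hσ : IsEdgeConstant A σ) {v w : V}
    (h : (edgeGraph A).Reachable v w) : σ v = σ w := by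
  rw [reachable_fromEdgeSet_eq_reflTransGen_toRel] at h
  induction h with
  | refl => rfl
  | tail _ hedge ih => exact ih.trans (hσ _ _ ((Sym2.toRel_prop _ _ _).mp hedge))

omit [Fintype V] [DecidableEq V] in
theorem isEdgeConstant_iff_exists_comp :
    IsEdgeConstant A σ ↔ ∃ c : (edgeGraph A).ConnectedComponent → α,
      c ∘ (edgeGraph A).connectedComponentMk = σ := by
  refine ⟨fun hσ => ⟨ConnectedComponent.lift σ fun _ _ p _ => hσ.eq_of_reachable p.reachable,
    rfl⟩, ?_⟩
  rintro ⟨c, rfl⟩ v w hvw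
  rcases eq_or_ne v w with rfl | hne
  · rfl
  · exact congrArg c (ConnectedComponent.connectedComponentMk_eq_of_adj
      ((fromEdgeSet_adj _).mpr ⟨hvw, hne⟩))

def componentFunctions (K : Type*) [Field K] (A : Finset (Sym2 V)) : Submodule K (V → K) :=
  LinearMap.range (LinearMap.funLeft K K (edgeGraph A).connectedComponentMk)

variable {K : Type*} [Field K]

omit [Fintype V] [DecidableEq V] in
theorem mem_componentFunctions {x : V → K} :
    x ∈ componentFunctions K A ↔ IsEdgeConstant A x := by
  rw [isEdgeConstant_iff_exists_comp]
  rfl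

theorem finrank_componentFunctions :
    Module.finrank K (componentFunctions K A) = numComponents A := by
  rw [componentFunctions, LinearMap.finrank_range_of_inj
    (LinearMap.funLeft_injective_of_surjective _ _ _ fun C => C.exists_rep)]
  exact Module.finrank_fintype_fun_eq_card K

omit [Fintype V] in
theorem componentFunctions_union :
    componentFunctions K (A ∪ B) = componentFunctions K A ⊓ componentFunctions K B := by
  ext x
  simp only [Submodule.mem_inf, mem_componentFunctions, isEdgeConstant_union]

omit [Fintype V] [DecidableEq V] in
theorem componentFunctions_anti (hAB : A ⊆ B) :
    componentFunctions K B ≤ componentFunctions K A :=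
  fun _ hx => mem_componentFunctions.mpr ((mem_componentFunctions.mp hx).anti hAB)

/-- `numComponents` is a dimension; the space for `A ∪ B` is the intersection of those for `A` and
`B`, and the space for `A ∩ B` contains their sum. -/
theorem numComponents_add_le (A B : Finset (Sym2 V)) :
    numComponents A + numComponents B ≤ numComponents (A ∩ B) + numComponents (A ∪ B) := by
  have hmod := Submodule.finrank_sup_add_finrank_inf_eq (componentFunctions ℚ A)
    (componentFunctions ℚ B)
  have hsup := Submodule.finrank_mono (sup_le
    (componentFunctions_anti (K := ℚ) (Finset.inter_subset_left (s₁ := A) (s₂ := B)))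
    (componentFunctions_anti Finset.inter_subset_right))
  rw [← componentFunctions_union] at hmod
  simp only [finrank_componentFunctions] at hmod hsup
  omega

end Components

section ComponentSums

open Classical in
def componentSum (A : Finset (Sym2 V)) (m : V → ℕ) (C : (edgeGraph A).ConnectedComponent) : ℕ :=
  ∑ v with (edgeGraph A).connectedComponentMk v = C, m v

variable {α : Type*} [Fintype α] {A B : Finset (Sym2 V)}

open Classical in
theorem sum_isEdgeConstant_eq_sum_comp {M : Type*} [AddCommMonoid M] (F : (V → α) → M) :
    ∑ σ with IsEdgeConstant A σ, F σ =
      ∑ c : (edgeGraph A).ConnectedComponent → α, F (c ∘ (edgeGraph A).connectedComponentMk) := by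
  have hinj : Function.Injective fun c : (edgeGraph A).ConnectedComponent → α =>
      c ∘ (edgeGraph A).connectedComponentMk :=
    Function.Surjective.injective_comp_right fun C => C.exists_rep
  rw [← Finset.sum_image fun c _ c' _ h => hinj h]
  congr 1
  ext σ
  simp [isEdgeConstant_iff_exists_comp]

open Classical in
theorem sum_isEdgeConstant_prod_pow {R : Type*} [CommSemiring R] (g : α → R) (m : V → ℕ) :
    ∑ σ with IsEdgeConstant A σ, ∏ v, g (σ v) ^ m v =
      ∏ C, ∑ x, g x ^ componentSum A m C := by
  rw [sum_isEdgeConstant_eq_sum_comp, Fintype.prod_sum]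
  refine Finset.sum_congr rfl fun c _ => ?_
  rw [← Finset.prod_fiberwise Finset.univ (edgeGraph A).connectedComponentMk]
  refine Finset.prod_congr rfl fun C _ => ?_
  rw [componentSum, ← Finset.prod_pow_eq_pow_sum]
  refine Finset.prod_congr rfl fun v hv => ?_
  rw [Function.comp_apply, (Finset.mem_filter.mp hv).2]

omit [DecidableEq V] in
theorem componentSum_add (m m' : V → ℕ) :
    componentSum A (m + m') = componentSum A m + componentSum A m' := by
  ext C
  simp only [componentSum, Pi.add_apply, Finset.sum_add_distrib]

omit [DecidableEq V] in
theorem componentSum_zero : componentSum A 0 = 0 := by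
  ext C
  simp [componentSum]

def componentMap (hAB : A ⊆ B) :
    (edgeGraph A).ConnectedComponent → (edgeGraph B).ConnectedComponent :=
  ConnectedComponent.map (Hom.ofLE (fromEdgeSet_mono (Finset.coe_subset.mpr hAB)))

open Classical in
theorem componentSum_eq_sum_fiber (hAB : A ⊆ B) (m : V → ℕ)
    (D : (edgeGraph B).ConnectedComponent) :
    componentSum B m D = ∑ C with componentMap hAB C = D, componentSum A m C := by
  simp only [componentSum]
  rw [Finset.sum_fiberwise_eq_sum_filter Finset.univ _ (edgeGraph A).connectedComponentMk m]
  refine Finset.sum_congr (Finset.filter_congr fun v _ => ?_) fun _ _ => rfl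
  simp only [Finset.mem_filter, Finset.mem_univ, true_and]
  rfl

end ComponentSums

section ClusterMoment

variable {q : ℕ} {f : Fin q → ℂ}

theorem sum_pow_eq_mul_powerMean [NeZero q] (f : Fin q → ℂ) (n : ℕ) :
    ∑ x, f x ^ n = q * powerMean q f n := by
  rw [powerMean, mul_div_cancel₀ _ (Nat.cast_ne_zero.mpr (NeZero.ne q))]

theorem powerMean_zero [NeZero q] (f : Fin q → ℂ) : powerMean q f 0 = 1 := by
  simp [powerMean]

theorem memF.prod_le_powerMean_sum [NeZero q] (hf : memF q f) {ι : Type*} (s : Finset ι)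
    (n : ι → ℕ) : ∏ i ∈ s, (powerMean q f (n i)).re ≤ (powerMean q f (∑ i ∈ s, n i)).re := by
  classical
  induction s using Finset.induction with
  | empty => simp [powerMean_zero]
  | insert i s hi ih =>
    rw [Finset.prod_insert hi, Finset.sum_insert hi]
    exact (mul_le_mul_of_nonneg_left ih (hf.1 _).2).trans (hf.2 _ _)

variable (f) in
/-- `∏_C E(f(X)^{m(C)})` over the components `C` of `(V, A)`; taking real parts loses nothing
for `f ∈ F_q`. -/
def clusterMoment (A : Finset (Sym2 V)) (m : V → ℕ) : ℝ :=
  ∏ C, (powerMean q f (componentSum A m C)).re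

theorem clusterMoment_nonneg (hf : memF q f) (m : V → ℕ) : 0 ≤ (clusterMoment f · m) :=
  fun _ => Finset.prod_nonneg fun _ _ => (hf.1 _).2

theorem clusterMoment_zero [NeZero q] (A : Finset (Sym2 V)) : clusterMoment f A 0 = 1 := by
  simp [clusterMoment, componentSum_zero, powerMean_zero]

theorem clusterMoment_mul_le (hf : memF q f) (A : Finset (Sym2 V)) (m m' : V → ℕ) :
    clusterMoment f A m * clusterMoment f A m' ≤ clusterMoment f A (m + m') := by
  rw [clusterMoment, clusterMoment, clusterMoment, ← Finset.prod_mul_distrib, componentSum_add]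
  exact Finset.prod_le_prod (fun _ _ => mul_nonneg (hf.1 _).2 (hf.1 _).2)
    fun _ _ => hf.2 _ _

theorem clusterMoment_mono [NeZero q] (hf : memF q f) (m : V → ℕ) :
    Monotone (clusterMoment f · m) := by
  classical
  intro A B (hAB : A ⊆ B)
  dsimp only
  rw [clusterMoment, ← Finset.prod_fiberwise Finset.univ (componentMap hAB), clusterMoment]
  refine Finset.prod_le_prod (fun _ _ => Finset.prod_nonneg fun _ _ => (hf.1 _).2)
    fun D _ => ?_
  rw [componentSum_eq_sum_fiber hAB]
  exact hf.prod_le_powerMean_sum _ _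

end ClusterMoment

section EdgeWeight

def edgeWeight (J : Sym2 V → ℝ) (A : Finset (Sym2 V)) : ℝ := ∏ e ∈ A, (Real.exp (J e) - 1)

variable {E : Finset (Sym2 V)} {J J' : Sym2 V → ℝ}

omit [Fintype V] [DecidableEq V] in
theorem edgeWeight_nonneg (hJ : ∀ e ∈ E, 0 ≤ J e) {A : Finset (Sym2 V)} (hA : A ⊆ E) :
    0 ≤ edgeWeight J A :=
  Finset.prod_nonneg fun e he => sub_nonneg.mpr (Real.one_le_exp (hJ e (hA he)))

omit [Fintype V] in
theorem edgeWeight_mul_le (hJ : ∀ e ∈ E, 0 ≤ J e) (hJJ' : ∀ e ∈ E, J e ≤ J' e)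
    {A B : Finset (Sym2 V)} (hA : A ⊆ E) (hB : B ⊆ E) :
    edgeWeight J A * edgeWeight J' B ≤ edgeWeight J (A ∩ B) * edgeWeight J' (A ∪ B) := by
  have hJ' : ∀ e ∈ E, 0 ≤ J' e := fun e he => (hJ e he).trans (hJJ' e he)
  have hdiff : edgeWeight J (A \ B) ≤ edgeWeight J' (A \ B) :=
    Finset.prod_le_prod
      (fun e he => sub_nonneg.mpr (Real.one_le_exp (hJ e (hA (Finset.sdiff_subset he)))))
      fun e he => sub_le_sub_right (Real.exp_le_exp.mpr (hJJ' e (hA (Finset.sdiff_subset he)))) 1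
  have hsplitA : edgeWeight J A = edgeWeight J (A ∩ B) * edgeWeight J (A \ B) :=
    (Finset.prod_inter_mul_prod_sdiff A B _).symm
  have hsplitAB : edgeWeight J' (A ∪ B) = edgeWeight J' B * edgeWeight J' (A \ B) := by
    rw [edgeWeight, ← Finset.prod_sdiff Finset.subset_union_right, Finset.union_sdiff_right,
      mul_comm]
    rfl
  rw [hsplitA, hsplitAB, mul_right_comm, ← mul_assoc]
  exact mul_le_mul_of_nonneg_left hdiff (mul_nonneg
    (edgeWeight_nonneg hJ (Finset.inter_subset_left.trans hA)) (edgeWeight_nonneg hJ' hB))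

end EdgeWeight

section RandomCluster

variable (q : ℝ) (E : Finset (Sym2 V)) (J : Sym2 V → ℝ)

/-- Set to `0` unless `A ⊆ E`, so that sums range over the whole lattice `Finset (Sym2 V)`. -/
def randomClusterWeight (A : Finset (Sym2 V)) : ℝ :=
  if A ⊆ E then edgeWeight J A * q ^ numComponents A else 0

def randomClusterMeasure (A : Finset (Sym2 V)) : ℝ :=
  randomClusterWeight q E J A / ∑ B, randomClusterWeight q E J B

variable {q E J} {J' : Sym2 V → ℝ}

theorem randomClusterWeight_nonneg (hq : 0 ≤ q) (hJ : ∀ e ∈ E, 0 ≤ J e) :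
    0 ≤ randomClusterWeight q E J := fun A => by
  rw [randomClusterWeight]
  split_ifs with hA
  exacts [mul_nonneg (edgeWeight_nonneg hJ hA) (pow_nonneg hq _), le_rfl]

theorem sum_randomClusterWeight_pos (hq : 0 < q) (hJ : ∀ e ∈ E, 0 ≤ J e) :
    0 < ∑ A, randomClusterWeight q E J A := by
  refine lt_of_lt_of_le ?_ (Finset.single_le_sum
    (fun A _ => randomClusterWeight_nonneg hq.le hJ A) (Finset.mem_univ ∅))
  simp [randomClusterWeight, edgeWeight, hq]

theorem randomClusterMeasure_nonneg (hq : 0 < q) (hJ : ∀ e ∈ E, 0 ≤ J e) :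
    0 ≤ randomClusterMeasure q E J := fun A =>
  div_nonneg (randomClusterWeight_nonneg hq.le hJ A) (sum_randomClusterWeight_pos hq hJ).le

theorem sum_randomClusterMeasure (hq : 0 < q) (hJ : ∀ e ∈ E, 0 ≤ J e) :
    ∑ A, randomClusterMeasure q E J A = 1 := by
  simp only [randomClusterMeasure]
  rw [← Finset.sum_div]
  exact div_self (sum_randomClusterWeight_pos hq hJ).ne'

theorem randomClusterWeight_mul_le (hq : 1 ≤ q) (hJ : ∀ e ∈ E, 0 ≤ J e)
    (hJJ' : ∀ e ∈ E, J e ≤ J' e) (A B : Finset (Sym2 V)) :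
    randomClusterWeight q E J A * randomClusterWeight q E J' B ≤
      randomClusterWeight q E J (A ⊓ B) * randomClusterWeight q E J' (A ⊔ B) := by
  have hJ' : ∀ e ∈ E, 0 ≤ J' e := fun e he => (hJ e he).trans (hJJ' e he)
  have hq0 : 0 ≤ q := zero_le_one.trans hq
  by_cases hAB : A ⊆ E ∧ B ⊆ E
  · have hinter : A ∩ B ⊆ E := Finset.inter_subset_left.trans hAB.1
    have hunion : A ∪ B ⊆ E := Finset.union_subset hAB.1 hAB.2
    have hpow : q ^ numComponents A * q ^ numComponents B ≤
        q ^ numComponents (A ∩ B) * q ^ numComponents (A ∪ B) := by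
      rw [← pow_add, ← pow_add]
      exact pow_le_pow_right₀ hq (numComponents_add_le A B)
    simp only [randomClusterWeight, Finset.inf_eq_inter, Finset.sup_eq_union, hAB.1, hAB.2,
      hinter, hunion, if_true]
    calc edgeWeight J A * q ^ numComponents A * (edgeWeight J' B * q ^ numComponents B)
        = edgeWeight J A * edgeWeight J' B * (q ^ numComponents A * q ^ numComponents B) := by
          ring
      _ ≤ edgeWeight J (A ∩ B) * edgeWeight J' (A ∪ B) *
            (q ^ numComponents (A ∩ B) * q ^ numComponents (A ∪ B)) :=
          mul_le_mul (edgeWeight_mul_le hJ hJJ' hAB.1 hAB.2) hpow (by positivity)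
            (mul_nonneg (edgeWeight_nonneg hJ hinter) (edgeWeight_nonneg hJ' hunion))
      _ = _ := by ring
  · have hzero : randomClusterWeight q E J A * randomClusterWeight q E J' B = 0 := by
      rcases not_and_or.mp hAB with h | h <;> simp [randomClusterWeight, h]
    rw [hzero]
    exact mul_nonneg (randomClusterWeight_nonneg hq0 hJ _) (randomClusterWeight_nonneg hq0 hJ' _)

theorem randomClusterMeasure_mul_le (hq : 1 ≤ q) (hJ : ∀ e ∈ E, 0 ≤ J e)
    (hJJ' : ∀ e ∈ E, J e ≤ J' e) (A B : Finset (Sym2 V)) :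
    randomClusterMeasure q E J A * randomClusterMeasure q E J' B ≤
      randomClusterMeasure q E J (A ⊓ B) * randomClusterMeasure q E J' (A ⊔ B) := by
  have hq0 : 0 ≤ q := zero_le_one.trans hq
  have hJ' : ∀ e ∈ E, 0 ≤ J' e := fun e he => (hJ e he).trans (hJJ' e he)
  simp only [randomClusterMeasure, div_mul_div_comm]
  exact div_le_div_of_nonneg_right (randomClusterWeight_mul_le hq hJ hJJ' A B)
    (mul_nonneg (Finset.sum_nonneg fun _ _ => randomClusterWeight_nonneg hq0 hJ _)
      (Finset.sum_nonneg fun _ _ => randomClusterWeight_nonneg hq0 hJ' _))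

theorem randomClusterMeasure_fkg (hq : 1 ≤ q) (hJ : ∀ e ∈ E, 0 ≤ J e)
    {g₁ g₂ : Finset (Sym2 V) → ℝ} (hg₁ : 0 ≤ g₁) (hg₂ : 0 ≤ g₂) (hm₁ : Monotone g₁)
    (hm₂ : Monotone g₂) :
    (∑ A, randomClusterMeasure q E J A * g₁ A) * ∑ A, randomClusterMeasure q E J A * g₂ A ≤
      ∑ A, randomClusterMeasure q E J A * (g₁ A * g₂ A) := by
  have hq0 : 0 < q := zero_lt_one.trans_le hq
  simpa [sum_randomClusterMeasure hq0 hJ] using fkg _ _ _ (randomClusterMeasure_nonneg hq0 hJ)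
    hg₁ hg₂ hm₁ hm₂ (randomClusterMeasure_mul_le hq hJ fun _ _ => le_rfl)

theorem randomClusterMeasure_holley (hq : 1 ≤ q) (hJ : ∀ e ∈ E, 0 ≤ J e)
    (hJJ' : ∀ e ∈ E, J e ≤ J' e) {g : Finset (Sym2 V) → ℝ} (hg₀ : 0 ≤ g) (hg : Monotone g) :
    ∑ A, randomClusterMeasure q E J A * g A ≤ ∑ A, randomClusterMeasure q E J' A * g A := by
  have hq0 : 0 < q := zero_lt_one.trans_le hq
  have hJ' : ∀ e ∈ E, 0 ≤ J' e := fun e he => (hJ e he).trans (hJJ' e he)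
  simp only [mul_comm (randomClusterMeasure _ _ _ _)]
  exact holley _ _ _ hg₀ (randomClusterMeasure_nonneg hq0 hJ) (randomClusterMeasure_nonneg hq0 hJ')
    hg (by rw [sum_randomClusterMeasure hq0 hJ, sum_randomClusterMeasure hq0 hJ'])
    (randomClusterMeasure_mul_le hq hJ hJJ')

end RandomCluster

theorem Finset.prod_eq_prod_pow_indicator {ι M : Type*} [CommMonoid M] [Fintype ι]
    (s : Finset ι) (g : ι → M) : ∏ i ∈ s, g i = ∏ i, g i ^ (s : Set ι).indicator 1 i := by
  classical
  simp [Set.indicator_apply, pow_ite]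

section FortuinKasteleyn

variable {q : ℕ}

open Classical in
omit [Fintype V] [DecidableEq V] in
theorem prod_edgeDelta (A : Finset (Sym2 V)) (σ : V → Fin q) :
    ∏ e ∈ A, edgeDelta σ e = if IsEdgeConstant A σ then 1 else 0 := by
  split_ifs with h
  · refine Finset.prod_eq_one fun e he => ?_
    induction e using Sym2.ind with
    | _ v w => simp [edgeDelta, h v w he]
  · obtain ⟨v, w, hvw, hne⟩ : ∃ v w, s(v, w) ∈ A ∧ σ v ≠ σ w := by
      simpa [IsEdgeConstant] using h
    exact Finset.prod_eq_zero hvw (by simp [edgeDelta, hne])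

omit [Fintype V] [DecidableEq V] in
theorem exp_mul_edgeDelta (t : ℝ) (σ : V → Fin q) (e : Sym2 V) :
    Real.exp (t * edgeDelta σ e) = (Real.exp t - 1) * edgeDelta σ e + 1 := by
  induction e using Sym2.ind with
  | _ v w => by_cases h : σ v = σ w <;> simp [edgeDelta, h]

variable [NeZero q] {f : Fin q → ℂ}

open Classical in
theorem pottsWeight_zero_field (E : Finset (Sym2 V)) (J : Sym2 V → ℝ) (σ : V → Fin q) :
    pottsWeight q E J (fun _ => 0) σ =
      ∑ A ∈ E.powerset, edgeWeight J A * if IsEdgeConstant A σ then 1 else 0 := by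
  simp only [pottsWeight, zero_mul, Finset.sum_const_zero, add_zero, Real.exp_sum,
    exp_mul_edgeDelta, Finset.prod_add, Finset.prod_const_one, mul_one]
  refine Finset.sum_congr rfl fun A _ => ?_
  rw [Finset.prod_mul_distrib, prod_edgeDelta, edgeWeight]

open Classical in
theorem sum_isEdgeConstant_prod_pow_eq_clusterMoment (hf : ∀ n, (powerMean q f n).im = 0)
    (A : Finset (Sym2 V)) (m : V → ℕ) :
    ∑ σ : V → Fin q with IsEdgeConstant A σ, ∏ v, f (σ v) ^ m v =
      (((q : ℝ) ^ numComponents A * clusterMoment f A m : ℝ) : ℂ) := by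
  simp only [sum_isEdgeConstant_prod_pow, sum_pow_eq_mul_powerMean, Finset.prod_mul_distrib,
    Finset.prod_const, Finset.card_univ, clusterMoment, Complex.ofReal_mul, Complex.ofReal_pow,
    Complex.ofReal_prod, Complex.ofReal_natCast]
  congr 1
  exact Finset.prod_congr rfl fun C _ => Complex.ext rfl (by simp [hf])

open Classical in
theorem sum_pottsWeight_mul_prod_pow (hf : ∀ n, (powerMean q f n).im = 0)
    (E : Finset (Sym2 V)) (J : Sym2 V → ℝ) (m : V → ℕ) :
    ∑ σ, (pottsWeight q E J (fun _ => 0) σ : ℂ) * ∏ v, f (σ v) ^ m v =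
      ((∑ A, randomClusterWeight q E J A * clusterMoment f A m : ℝ) : ℂ) := by
  have hsupport : ∑ A, randomClusterWeight q E J A * clusterMoment f A m =
      ∑ A ∈ E.powerset, edgeWeight J A * q ^ numComponents A * clusterMoment f A m := by
    rw [← Finset.sum_subset (Finset.subset_univ E.powerset) fun A _ hA => by
      simp [randomClusterWeight, Finset.mem_powerset.not.mp hA]]
    exact Finset.sum_congr rfl fun A hA => by
      rw [randomClusterWeight, if_pos (Finset.mem_powerset.mp hA)]
  calc ∑ σ, (pottsWeight q E J (fun _ => 0) σ : ℂ) * ∏ v, f (σ v) ^ m v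
      = ∑ A ∈ E.powerset, (edgeWeight J A : ℂ) *
          ∑ σ with IsEdgeConstant A σ, ∏ v, f (σ v) ^ m v := by
        simp only [pottsWeight_zero_field, Complex.ofReal_sum, Finset.sum_mul, Finset.mul_sum,
          Finset.sum_filter]
        rw [Finset.sum_comm]
        refine Finset.sum_congr rfl fun A _ => Finset.sum_congr rfl fun σ _ => ?_
        split_ifs <;> simp
    _ = _ := by
        simp only [sum_isEdgeConstant_prod_pow_eq_clusterMoment hf, hsupport]
        push_cast
        exact Finset.sum_congr rfl fun A _ => by ring

theorem pottsZ_zero_field (E : Finset (Sym2 V)) (J : Sym2 V → ℝ) :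
    pottsZ q E J (fun _ => 0) = ∑ A, randomClusterWeight q E J A := by
  have h := sum_pottsWeight_mul_prod_pow (q := q) (f := fun _ => 1)
    (fun n => by simp [powerMean]) E J 0
  simp only [Pi.zero_apply, pow_zero, Finset.prod_const_one, mul_one, clusterMoment_zero] at h
  exact_mod_cast h

theorem sum_pottsPMF_mul_prod_pow (hf : ∀ n, (powerMean q f n).im = 0)
    (E : Finset (Sym2 V)) (J : Sym2 V → ℝ) (m : V → ℕ) :
    ∑ σ, (pottsPMF q E J (fun _ => 0) σ : ℂ) * ∏ v, f (σ v) ^ m v =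
      ((∑ A, randomClusterMeasure q E J A * clusterMoment f A m : ℝ) : ℂ) := by
  simp only [pottsPMF, randomClusterMeasure, div_mul_eq_mul_div, Complex.ofReal_div,
    ← Finset.sum_div, sum_pottsWeight_mul_prod_pow hf, ← pottsZ_zero_field]

theorem pottsMean_zero_field_eq (hf : ∀ n, (powerMean q f n).im = 0)
    (E : Finset (Sym2 V)) (J : Sym2 V → ℝ) (R : Finset V) :
    pottsMean q E J (fun _ => 0) f R =
      ((∑ A, randomClusterMeasure q E J A *
        clusterMoment f A ((R : Set V).indicator 1) : ℝ) : ℂ) := by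
  simp only [pottsMean, Finset.prod_eq_prod_pow_indicator R, sum_pottsPMF_mul_prod_pow hf]

theorem pottsMean2_zero_field_eq (hf : ∀ n, (powerMean q f n).im = 0)
    (E : Finset (Sym2 V)) (J : Sym2 V → ℝ) (R S : Finset V) :
    pottsMean2 q E J (fun _ => 0) f f R S =
      ((∑ A, randomClusterMeasure q E J A *
        clusterMoment f A ((R : Set V).indicator 1 + (S : Set V).indicator 1) : ℝ) : ℂ) := by
  simp only [pottsMean2, Finset.prod_eq_prod_pow_indicator R, Finset.prod_eq_prod_pow_indicator S,
    ← Finset.prod_mul_distrib, ← pow_add]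
  exact sum_pottsPMF_mul_prod_pow hf E J _

end FortuinKasteleyn

theorem pottsMean_zero_field_general
    (q : ℕ) [NeZero q]
    (E : Finset (Sym2 V))
    (J : Sym2 V → ℝ) (hJ : ∀ e ∈ E, 0 ≤ J e)
    (f : Fin q → ℂ) (hf : memF q f) :
    (∀ R : Finset V,
      (pottsMean q E J (fun _ => 0) f R).im = 0 ∧
      0 ≤ (pottsMean q E J (fun _ => 0) f R).re) ∧
    (∀ (J' : Sym2 V → ℝ), (∀ e ∈ E, 0 ≤ J' e) → (∀ e ∈ E, J e ≤ J' e) →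
      ∀ R : Finset V,
        (pottsMean q E J (fun _ => 0) f R).re ≤
          (pottsMean q E J' (fun _ => 0) f R).re) ∧
    (∀ R S : Finset V,
      (pottsMean q E J (fun _ => 0) f R).re * (pottsMean q E J (fun _ => 0) f S).re ≤
        (pottsMean2 q E J (fun _ => 0) f f R S).re) := by
  have hq : (1 : ℝ) ≤ q := Nat.one_le_cast.mpr NeZero.one_le
  have hreal (n : ℕ) : (powerMean q f n).im = 0 := (hf.1 n).1
  refine ⟨fun R => ?_, fun J' _ hJJ' R => ?_, fun R S => ?_⟩
  · rw [pottsMean_zero_field_eq hreal, Complex.ofReal_im, Complex.ofReal_re]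
    exact ⟨rfl, Finset.sum_nonneg fun A _ => mul_nonneg
      (randomClusterMeasure_nonneg (zero_lt_one.trans_le hq) hJ A) (clusterMoment_nonneg hf _ A)⟩
  · simp only [pottsMean_zero_field_eq hreal, Complex.ofReal_re]
    exact randomClusterMeasure_holley hq hJ hJJ' (clusterMoment_nonneg hf _)
      (clusterMoment_mono hf _)
  · simp only [pottsMean_zero_field_eq hreal, pottsMean2_zero_field_eq hreal, Complex.ofReal_re]
    refine (randomClusterMeasure_fkg hq hJ (clusterMoment_nonneg hf _) (clusterMoment_nonneg hf _)
      (clusterMoment_mono hf _) (clusterMoment_mono hf _)).trans (Finset.sum_le_sum fun A _ => ?_)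
    exact mul_le_mul_of_nonneg_left (clusterMoment_mul_le hf A _ _)
      (randomClusterMeasure_nonneg (zero_lt_one.trans_le hq) hJ A)

/-- With zero external field it suffices that `f ∈ F_q`: the means `⟨f(σ)^R⟩` are real
and nonnegative, non-decreasing in `J`, and satisfy the GKS-type inequality. -/
theorem pottsMean_zero_field
    (q : ℕ) [NeZero q] (hq : 2 ≤ q)
    (E : Finset (Sym2 V)) (hE : ∀ e ∈ E, ¬ e.IsDiag)
    (J : Sym2 V → ℝ) (hJ : ∀ e ∈ E, 0 ≤ J e)
    (f : Fin q → ℂ) (hf : memF q f) :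
    (∀ R : Finset V,
      (pottsMean q E J (fun _ => 0) f R).im = 0 ∧
      0 ≤ (pottsMean q E J (fun _ => 0) f R).re) ∧
    (∀ (J' : Sym2 V → ℝ), (∀ e ∈ E, 0 ≤ J' e) → (∀ e ∈ E, J e ≤ J' e) →
      ∀ R : Finset V,
        (pottsMean q E J (fun _ => 0) f R).re ≤
          (pottsMean q E J' (fun _ => 0) f R).re) ∧
    (∀ R S : Finset V,
      (pottsMean q E J (fun _ => 0) f R).re * (pottsMean q E J (fun _ => 0) f S).re ≤
        (pottsMean2 q E J (fun _ => 0) f f R S).re) :=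
  pottsMean_zero_field_general q E J hJ f hf
end
end

section
/- Let q ≥ 2 be an integer. The function f : Q → ℂ given by f(x) = (q−1)/2 − x belongs to F_q^0; that is, for all integers m,n ≥ 0, E(f(X)^m) is real and nonnegative, E(f(X)^{m+n}) ≥ E(f(X)^m)·E(f(X)^n), and f(0) = max{|f(x)| : x ∈ Q}. -/
open Finset

noncomputable section

variable {V : Type*} [Fintype V] [DecidableEq V]

/-!
A real function `g` that is odd under some permutation of its domain (`g ∘ e = -g`) has
vanishing odd power sums, so every moment `E(g(X)^m)` is either `0` or a mean of even powers.
Even powers of `g` are increasing functions of `|g|`, hence monovary, and Chebyshev's sum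
inequality gives `E(g^m) E(g^n) ≤ E(g^(m+n))`; if `m` or `n` is odd the left side vanishes.
The linear function `(q-1)/2 - x` is odd under the reversal `x ↦ q-1-x` and takes its largest
absolute value at `x = 0`.
-/

lemma monovary_pow_of_even {ι : Type*} (g : ι → ℝ) {m n : ℕ} (hm : Even m) (hn : Even n) :
    Monovary (fun x => g x ^ m) (fun x => g x ^ n) := by
  have hpow_abs {k : ℕ} (hk : Even k) : (fun x => g x ^ k) = (fun x => |g x|) ^ k :=
    funext fun x => (hk.pow_abs (g x)).symm
  rw [hpow_abs hm, hpow_abs hn]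
  exact ((monovary_self _).pow_left₀ (fun x => abs_nonneg (g x)) m).pow_right₀
    (fun x => abs_nonneg (g x)) n

section OddUnderPerm

variable {ι : Type*} [Fintype ι] {g : ι → ℝ} {e : Equiv.Perm ι}

lemma sum_pow_eq_zero_of_odd (he : ∀ x, g (e x) = -g x) {m : ℕ} (hm : Odd m) :
    ∑ x, g x ^ m = 0 := by
  have h := Equiv.sum_comp e (fun x => g x ^ m)
  simp only [he, hm.neg_pow, sum_neg_distrib] at h
  linarith

lemma sum_pow_nonneg_of_odd_under_perm (he : ∀ x, g (e x) = -g x) (m : ℕ) :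
    0 ≤ ∑ x, g x ^ m := by
  rcases Nat.even_or_odd m with hm | hm
  · exact sum_nonneg fun x _ => hm.pow_nonneg _
  · rw [sum_pow_eq_zero_of_odd he hm]

lemma sum_pow_mul_sum_pow_le_of_odd_under_perm (he : ∀ x, g (e x) = -g x) (m n : ℕ) :
    (∑ x, g x ^ m) * ∑ x, g x ^ n ≤ Fintype.card ι * ∑ x, g x ^ (m + n) := by
  have hrhs : 0 ≤ (Fintype.card ι : ℝ) * ∑ x, g x ^ (m + n) :=
    mul_nonneg (Nat.cast_nonneg _) (sum_pow_nonneg_of_odd_under_perm he _)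
  rcases Nat.even_or_odd m with hm | hm
  · rcases Nat.even_or_odd n with hn | hn
    · simpa only [pow_add] using (monovary_pow_of_even g hm hn).sum_mul_sum_le_card_mul_sum
    · rwa [sum_pow_eq_zero_of_odd he hn, mul_zero]
  · rwa [sum_pow_eq_zero_of_odd he hm, zero_mul]

end OddUnderPerm

lemma powerMean_ofReal (q : ℕ) (g : Fin q → ℝ) (m : ℕ) :
    powerMean q (fun x => (g x : ℂ)) m = ((∑ x, g x ^ m) / q : ℝ) := by
  simp [powerMean]

lemma memF_ofReal_of_odd_under_perm {q : ℕ} {g : Fin q → ℝ} {e : Equiv.Perm (Fin q)}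
    (he : ∀ x, g (e x) = -g x) : memF q (fun x => (g x : ℂ)) := by
  simp only [memF, powerMean_ofReal, Complex.ofReal_im, Complex.ofReal_re, true_and]
  refine ⟨fun m => div_nonneg (sum_pow_nonneg_of_odd_under_perm he m) q.cast_nonneg,
    fun m n => ?_⟩
  rcases q.eq_zero_or_pos with rfl | hq
  · simp
  have hcheb := sum_pow_mul_sum_pow_le_of_odd_under_perm he m n
  rw [Fintype.card_fin] at hcheb
  calc (∑ x, g x ^ m) / q * ((∑ x, g x ^ n) / q) = (∑ x, g x ^ m) * (∑ x, g x ^ n) / q ^ 2 := by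
        ring
    _ ≤ q * (∑ x, g x ^ (m + n)) / q ^ 2 := by gcongr
    _ = (∑ x, g x ^ (m + n)) / q := by field_simp

section Linear

variable (q : ℕ)

def centeredId (x : Fin q) : ℝ := ((q : ℝ) - 1) / 2 - (x : ℕ)

lemma centeredId_rev (x : Fin q) : centeredId q x.rev = -centeredId q x := by
  rw [centeredId, centeredId, Fin.val_rev, Nat.cast_sub x.isLt]
  push_cast
  ring

lemma abs_centeredId_le [NeZero q] (x : Fin q) : |centeredId q x| ≤ centeredId q 0 := by
  have hx : (x : ℝ) + 1 ≤ q := by exact_mod_cast x.isLt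
  rw [abs_le, centeredId, centeredId]
  have hx0 : (0 : ℝ) ≤ (x : ℕ) := Nat.cast_nonneg _
  constructor <;> simp only [Fin.val_zero, Nat.cast_zero] <;> linarith

end Linear

theorem linear_mem_F0_general (q : ℕ) [NeZero q] :
    memF0 q (fun x : Fin q => ((q : ℂ) - 1) / 2 - (x : ℕ)) := by
  have hf : (fun x : Fin q => ((q : ℂ) - 1) / 2 - (x : ℕ)) = fun x => (centeredId q x : ℂ) := by
    funext x
    simp [centeredId]
  have h0 : 0 ≤ centeredId q 0 := (abs_nonneg _).trans (abs_centeredId_le q 0)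
  rw [hf]
  refine ⟨memF_ofReal_of_odd_under_perm (e := Fin.revPerm) (centeredId_rev q), ?_, fun x => ?_⟩
  · rw [Complex.norm_real, Real.norm_of_nonneg h0]
  · simpa only [Complex.norm_real, Real.norm_eq_abs, abs_of_nonneg h0] using abs_centeredId_le q x

/-- The function `f(x) = (q-1)/2 - x` belongs to `F_q^0`. -/
theorem linear_mem_F0 (q : ℕ) [NeZero q] (hq : 2 ≤ q) :
    memF0 q (fun x : Fin q => ((q : ℂ) - 1) / 2 - (x : ℕ)) :=
  linear_mem_F0_general q
end
end

section
/- Suppose the external field vanishes, h_v = 0 for all v ∈ V. Let f_0 ∈ F_q (membership in F_q^0 is not required) and let f_1 : Q → ℂ satisfy: E(f_1(X)^m) is real and nonnegative for every integer m ≥ 0. If f_0(x)·f_1(x) = 0 for every x ∈ Q, then for all R, S ⊆ V one has ⟨f_0(σ)^R f_1(σ)^S⟩ ≤ ⟨f_0(σ)^R⟩ · ⟨f_1(σ)^S⟩. -/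
open Finset

noncomputable section

variable {V : Type*} [Fintype V] [DecidableEq V]

/-!
At zero field `exp (J δ) = 1 + (e^J - 1) δ` for `δ ∈ {0, 1}`, so expanding the product over edges
(Fortuin–Kasteleyn) writes the Potts measure as the spin marginal of a coupling with the
random-cluster measure `φ(ω) ∝ ∏_{e ∈ ω} (e^{J_e} - 1) q^{k(ω)}`, under which the spins are
uniform and constant on each cluster, independently. Hence `⟨f(σ)^R⟩ = φ(∏_C E f(X)^{|C ∩ R|})`,
and, because `f₀ f₁ = 0`, `⟨f₀(σ)^R f₁(σ)^S⟩` is `φ` of the product of both cluster weights in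
which every cluster meeting both `R` and `S` counts `0`.

Condition on the clusters of `S`. If they meet `R`, the joint weight vanishes; otherwise the rest
of the configuration is random-cluster on the edges off these clusters, and the `f₀`-weight is the
same function of it as before. That function is increasing because `f₀ ∈ F_q` makes
`C ↦ E f₀(X)^{|C ∩ R|}` supermultiplicative, and an increasing function has smaller
random-cluster expectation on a smaller edge set, by the FKG inequality (`q^{k(ω)}` is
log-supermodular). Averaging over the clusters of `S` gives the inequality.
-/

namespace PottsFK

open Finset
open scoped Classical

variable {V : Type*}

def Linked (ω : Finset (Sym2 V)) : V → V → Prop :=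
  Relation.ReflTransGen fun a b => s(a, b) ∈ ω

namespace Linked

variable {ω ω' : Finset (Sym2 V)} {u v w : V}

lemma refl (ω : Finset (Sym2 V)) (v : V) : Linked ω v v := Relation.ReflTransGen.refl

lemma trans (h : Linked ω u v) (h' : Linked ω v w) : Linked ω u w :=
  Relation.ReflTransGen.trans h h'

lemma of_mem (h : s(u, v) ∈ ω) : Linked ω u v := Relation.ReflTransGen.single h

lemma symm (h : Linked ω u v) : Linked ω v u := by
  induction h with
  | refl => exact refl ω _
  | tail _ hbc ih => exact (of_mem (Sym2.eq_swap ▸ hbc)).trans ih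

lemma symm_iff : Linked ω u v ↔ Linked ω v u := ⟨symm, symm⟩

lemma mono (hωω' : ω ⊆ ω') (h : Linked ω u v) : Linked ω' u v :=
  Relation.ReflTransGen.mono (fun _ _ hab => hωω' hab) _ _ h

end Linked

variable {W S : Finset V} {ω η ζ : Finset (Sym2 V)} {u v x y : V}

lemma Linked.mem_of_mem (hη : ∀ e ∈ η, ∀ v ∈ e, v ∈ W) (h : Linked η u v) (hu : u ∈ W) :
    v ∈ W := by
  induction h with
  | refl => exact hu
  | @tail b c _ hbc _ => exact hη _ hbc c (Sym2.mem_mk_right b c)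

lemma Linked.eq_of_notMem (hη : ∀ e ∈ η, ∀ v ∈ e, v ∈ W) (h : Linked η u v) (hu : u ∉ W) :
    u = v := by
  rcases Relation.ReflTransGen.cases_head h with rfl | ⟨b, hub, -⟩
  · rfl
  · exact absurd (hη _ hub u (Sym2.mem_mk_left u b)) hu

lemma Linked.apply_eq {α : Type*} {f : V → α} (hf : ∀ x y, s(x, y) ∈ η → f x = f y)
    (h : Linked η u v) : f u = f v := by
  induction h with
  | refl => rfl
  | @tail b c _ hbc ih => exact ih.trans (hf b c hbc)

lemma disjoint_of_forall_mem_of_forall_notMem (hη : ∀ e ∈ η, ∀ v ∈ e, v ∈ W)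
    (hζ : ∀ e ∈ ζ, ∀ v ∈ e, v ∉ W) : Disjoint η ζ :=
  disjoint_left.2 fun e he he' => hζ e he' _ e.out_fst_mem (hη e he _ e.out_fst_mem)

section Insert

variable [DecidableEq V]

lemma linked_insert_iff :
    Linked (insert s(x, y) ω) u v ↔
      Linked ω u v ∨ (Linked ω u x ∧ Linked ω y v) ∨ (Linked ω u y ∧ Linked ω x v) := by
  refine ⟨fun h => ?_, ?_⟩
  · induction h with
    | refl => exact Or.inl (.refl ω u)
    | @tail b c _ hbc ih =>
      rcases mem_insert.1 hbc with hbc | hbc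
      · rcases Sym2.eq_iff.1 hbc with ⟨rfl, rfl⟩ | ⟨rfl, rfl⟩ <;>
          rcases ih with h | ⟨h, -⟩ | ⟨h, -⟩ <;> simp [Linked.refl, h]
      · rcases ih with h | ⟨h, h'⟩ | ⟨h, h'⟩
        · exact Or.inl (h.trans (.of_mem hbc))
        · exact Or.inr (Or.inl ⟨h, h'.trans (.of_mem hbc)⟩)
        · exact Or.inr (Or.inr ⟨h, h'.trans (.of_mem hbc)⟩)
  · have hsub : ω ⊆ insert s(x, y) ω := subset_insert _ _
    have hxy : Linked (insert s(x, y) ω) x y := .of_mem (mem_insert_self _ _)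
    rintro (h | ⟨h, h'⟩ | ⟨h, h'⟩)
    · exact h.mono hsub
    · exact (h.mono hsub).trans (hxy.trans (h'.mono hsub))
    · exact (h.mono hsub).trans (hxy.symm.trans (h'.mono hsub))

lemma linked_insert_iff_of_linked (hxy : Linked ω x y) :
    Linked (insert s(x, y) ω) u v ↔ Linked ω u v := by
  rw [linked_insert_iff]
  refine ⟨?_, Or.inl⟩
  rintro (h | ⟨h, h'⟩ | ⟨h, h'⟩)
  · exact h
  · exact h.trans (hxy.trans h')
  · exact h.trans (hxy.symm.trans h')

end Insert

variable [Fintype V]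

def cluster (ω : Finset (Sym2 V)) (v : V) : Finset V := {u | Linked ω v u}

@[simp] lemma mem_cluster : u ∈ cluster ω v ↔ Linked ω v u := by simp [cluster]

lemma mem_cluster_self : v ∈ cluster ω v := mem_cluster.2 (.refl ω v)

lemma cluster_eq_cluster_iff : cluster ω u = cluster ω v ↔ Linked ω u v := by
  refine ⟨fun h => mem_cluster.1 (h ▸ mem_cluster_self), fun h => ?_⟩
  ext w
  simp only [mem_cluster]
  exact ⟨h.symm.trans, h.trans⟩

lemma disjoint_cluster (h : ¬ Linked ω u v) : Disjoint (cluster ω u) (cluster ω v) := by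
  rw [disjoint_left]
  intro w hu hv
  exact h ((mem_cluster.1 hu).trans (mem_cluster.1 hv).symm)

lemma cluster_subset (hη : ∀ e ∈ η, ∀ v ∈ e, v ∈ W) (hv : v ∈ W) : cluster η v ⊆ W :=
  fun _ hu => (mem_cluster.1 hu).mem_of_mem hη hv

lemma cluster_empty (v : V) : cluster (∅ : Finset (Sym2 V)) v = {v} := by
  ext u
  simp only [mem_cluster, mem_singleton]
  exact ⟨fun h => (h.eq_of_notMem (W := ∅) (by simp) (notMem_empty v)).symm,
    fun h => h ▸ .refl _ _⟩

def territory (S : Finset V) (ω : Finset (Sym2 V)) : Finset V := {v | ∃ s ∈ S, Linked ω s v}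

lemma mem_territory : v ∈ territory S ω ↔ ∃ s ∈ S, Linked ω s v := by simp [territory]

lemma subset_territory : S ⊆ territory S ω := fun s hs => mem_territory.2 ⟨s, hs, .refl ω s⟩

lemma Linked.mem_territory (h : Linked ω u v) (hu : u ∈ territory S ω) : v ∈ territory S ω := by
  obtain ⟨s, hs, hsu⟩ := PottsFK.mem_territory.1 hu
  exact PottsFK.mem_territory.2 ⟨s, hs, hsu.trans h⟩

variable [DecidableEq V]

def clusters (ω : Finset (Sym2 V)) : Finset (Finset V) := univ.image (cluster ω)

def numClusters (ω : Finset (Sym2 V)) : ℕ := #(clusters ω)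

lemma mem_clusters {C : Finset V} : C ∈ clusters ω ↔ ∃ v, cluster ω v = C := by
  simp [clusters]

lemma cluster_mem_clusters (ω : Finset (Sym2 V)) (v : V) : cluster ω v ∈ clusters ω :=
  mem_clusters.2 ⟨v, rfl⟩

lemma clusters_insert_of_linked (hxy : Linked ω x y) :
    clusters (insert s(x, y) ω) = clusters ω := by
  have : cluster (insert s(x, y) ω) = cluster ω := by
    ext v u
    simp [linked_insert_iff_of_linked hxy]
  rw [clusters, this, clusters]

lemma cluster_insert_of_not_linked (hv : ¬ (Linked ω v x ∨ Linked ω v y)) :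
    cluster (insert s(x, y) ω) v = cluster ω v := by
  simp only [not_or] at hv
  ext u
  simp only [mem_cluster, linked_insert_iff]
  refine ⟨?_, Or.inl⟩
  rintro (h | ⟨h, -⟩ | ⟨h, -⟩)
  exacts [h, absurd h hv.1, absurd h hv.2]

lemma cluster_insert_of_linked (hv : Linked ω v x ∨ Linked ω v y) :
    cluster (insert s(x, y) ω) v = cluster ω x ∪ cluster ω y := by
  ext u
  simp only [mem_cluster, mem_union, linked_insert_iff]
  rcases hv with hv | hv
  · refine ⟨?_, ?_⟩
    · rintro (h | ⟨-, h⟩ | ⟨-, h⟩)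
      exacts [Or.inl (hv.symm.trans h), Or.inr h, Or.inl h]
    · rintro (h | h)
      exacts [Or.inl (hv.trans h), Or.inr (Or.inl ⟨hv, h⟩)]
  · refine ⟨?_, ?_⟩
    · rintro (h | ⟨-, h⟩ | ⟨-, h⟩)
      exacts [Or.inr (hv.symm.trans h), Or.inr h, Or.inl h]
    · rintro (h | h)
      exacts [Or.inr (Or.inr ⟨hv, h⟩), Or.inl (hv.trans h)]

lemma clusters_insert :
    clusters (insert s(x, y) ω) =
      insert (cluster ω x ∪ cluster ω y)
        (((clusters ω).erase (cluster ω x)).erase (cluster ω y)) := by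
  ext C
  simp only [mem_clusters, mem_insert, mem_erase, Ne]
  constructor
  · rintro ⟨v, rfl⟩
    by_cases hv : Linked ω v x ∨ Linked ω v y
    · exact Or.inl (cluster_insert_of_linked hv)
    · rw [cluster_insert_of_not_linked hv]
      simp only [not_or] at hv
      exact Or.inr ⟨fun h => hv.2 (cluster_eq_cluster_iff.1 h),
        fun h => hv.1 (cluster_eq_cluster_iff.1 h), v, rfl⟩
  · rintro (rfl | ⟨hCy, hCx, v, rfl⟩)
    · exact ⟨x, cluster_insert_of_linked (Or.inl (.refl ω x))⟩
    · rw [cluster_eq_cluster_iff] at hCy hCx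
      exact ⟨v, cluster_insert_of_not_linked (by tauto)⟩

section Merge

variable (hxy : ¬ Linked ω x y)
include hxy

lemma cluster_union_notMem_erase :
    cluster ω x ∪ cluster ω y ∉ ((clusters ω).erase (cluster ω x)).erase (cluster ω y) := by
  simp only [mem_erase, mem_clusters, not_and]
  rintro - - ⟨v, hv⟩
  have hvx : Linked ω v x := mem_cluster.1 (hv ▸ mem_union_left _ mem_cluster_self)
  have hvy : Linked ω v y := mem_cluster.1 (hv ▸ mem_union_right _ mem_cluster_self)
  exact hxy (hvx.symm.trans hvy)

lemma cluster_mem_clusters_erase : cluster ω y ∈ (clusters ω).erase (cluster ω x) :=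
  mem_erase.2 ⟨fun h => hxy (cluster_eq_cluster_iff.1 h).symm, cluster_mem_clusters ω y⟩

lemma numClusters_insert_of_not_linked : numClusters (insert s(x, y) ω) + 1 = numClusters ω := by
  have hx := cluster_mem_clusters ω x
  have hy := cluster_mem_clusters_erase hxy
  have := card_pos.2 ⟨_, hy⟩
  rw [card_erase_of_mem hx] at this
  rw [numClusters, numClusters, clusters_insert,
    card_insert_of_notMem (cluster_union_notMem_erase hxy), card_erase_of_mem hy,
    card_erase_of_mem hx]
  omega

end Merge

lemma numClusters_insert_of_linked (hxy : Linked ω x y) :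
    numClusters (insert s(x, y) ω) = numClusters ω := by
  rw [numClusters, clusters_insert_of_linked hxy, numClusters]

lemma numClusters_add_union_le_of_subset {A B : Finset (Sym2 V)} (hAB : A ⊆ B)
    (C : Finset (Sym2 V)) :
    numClusters B + numClusters (A ∪ C) ≤ numClusters A + numClusters (B ∪ C) := by
  induction C using Finset.induction with
  | empty => simp only [union_empty]; omega
  | @insert e C _ ih =>
    rw [union_insert, union_insert]
    induction e using Sym2.ind with
    | _ x y =>
      by_cases hA : Linked (A ∪ C) x y
      · rw [numClusters_insert_of_linked hA,
          numClusters_insert_of_linked (hA.mono (union_subset_union_left hAB))]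
        exact ih
      · have := numClusters_insert_of_not_linked hA
        by_cases hB : Linked (B ∪ C) x y
        · rw [numClusters_insert_of_linked hB]; omega
        · have := numClusters_insert_of_not_linked hB; omega

lemma numClusters_add_numClusters_le (a b : Finset (Sym2 V)) :
    numClusters a + numClusters b ≤ numClusters (a ∩ b) + numClusters (a ∪ b) := by
  have := numClusters_add_union_le_of_subset (inter_subset_right : a ∩ b ⊆ b) a
  rw [union_eq_right.2 inter_subset_left, union_comm b a] at this
  omega

lemma prod_clusters_prod {M : Type*} [CommMonoid M] (ω : Finset (Sym2 V)) (F : V → M) :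
    ∏ C ∈ clusters ω, ∏ v ∈ C, F v = ∏ v, F v := by
  rw [← prod_fiberwise_of_maps_to (g := cluster ω) fun v _ => cluster_mem_clusters ω v]
  refine prod_congr rfl fun C hC => ?_
  obtain ⟨w, rfl⟩ := mem_clusters.1 hC
  congr 1
  ext v
  simp [cluster_eq_cluster_iff, Linked.symm_iff]

lemma sum_linked_prod {α M : Type*} [Fintype α] [DecidableEq α] [CommSemiring M]
    (ω : Finset (Sym2 V)) (g : V → α → M) :
    ∑ σ : V → α with ∀ u v, Linked ω u v → σ u = σ v, ∏ v, g v (σ v) =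
      ∏ C ∈ clusters ω, ∑ x, ∏ v ∈ C, g v x := by
  choose rep hrep using fun C : clusters ω => mem_clusters.1 C.2
  rw [← prod_coe_sort (clusters ω), Fintype.prod_sum]
  refine sum_nbij' (fun σ C => σ (rep C)) (fun τ v => τ ⟨cluster ω v, cluster_mem_clusters ω v⟩)
    (fun _ _ => mem_univ _) (fun τ _ => ?_) (fun σ hσ => ?_) (fun τ _ => ?_) (fun σ hσ => ?_)
  · simp only [mem_filter, mem_univ, true_and]
    exact fun u v h => congrArg τ (Subtype.ext (cluster_eq_cluster_iff.2 h))
  · simp only [mem_filter, mem_univ, true_and] at hσ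
    exact funext fun v => hσ _ _ (cluster_eq_cluster_iff.1 (hrep _))
  · exact funext fun C => congrArg τ (Subtype.ext (hrep C))
  · simp only [mem_filter, mem_univ, true_and] at hσ
    rw [← prod_clusters_prod ω, ← prod_coe_sort (clusters ω)]
    refine prod_congr rfl fun C _ => prod_congr rfl fun v hv => ?_
    rw [← hrep C, mem_cluster] at hv
    exact congrArg (g v) (hσ _ _ hv).symm

def clusterProd {M : Type*} [CommMonoid M] (w : Finset V → M) (ω : Finset (Sym2 V)) : M :=
  ∏ C ∈ clusters ω, w C

lemma clusterProd_const {M : Type*} [CommMonoid M] (c : M) (ω : Finset (Sym2 V)) :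
    clusterProd (fun _ => c) ω = c ^ numClusters ω :=
  prod_const c

lemma clusterProd_nonneg {w : Finset V → ℝ} (hw : ∀ C, 0 ≤ w C) (ω : Finset (Sym2 V)) :
    0 ≤ clusterProd w ω :=
  prod_nonneg fun C _ => hw C

section Supermultiplicative

variable {w : Finset V → ℝ} (hw : ∀ C, 0 ≤ w C)
  (hsup : ∀ A B, Disjoint A B → w A * w B ≤ w (A ∪ B))
include hw hsup

lemma clusterProd_le_clusterProd_insert (ω : Finset (Sym2 V)) (e : Sym2 V) :
    clusterProd w ω ≤ clusterProd w (insert e ω) := by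
  induction e using Sym2.ind with
  | _ x y =>
    by_cases hxy : Linked ω x y
    · rw [clusterProd, clusterProd, clusters_insert_of_linked hxy]
    · rw [clusterProd, clusterProd, clusters_insert,
        prod_insert (cluster_union_notMem_erase hxy),
        ← mul_prod_erase _ _ (cluster_mem_clusters ω x),
        ← mul_prod_erase _ _ (cluster_mem_clusters_erase hxy), ← mul_assoc]
      exact mul_le_mul_of_nonneg_right (hsup _ _ (disjoint_cluster hxy))
        (prod_nonneg fun C _ => hw C)

lemma clusterProd_mono : Monotone (clusterProd w : Finset (Sym2 V) → ℝ) := by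
  intro ω ω' h
  rw [← union_sdiff_of_subset h]
  generalize ω' \ ω = D
  induction D using Finset.induction_on with
  | empty => rw [union_empty]
  | insert e D _ ih =>
    rw [union_insert]
    exact ih.trans (clusterProd_le_clusterProd_insert hw hsup _ e)

end Supermultiplicative

section Split

lemma cluster_union_of_mem (hη : ∀ e ∈ η, ∀ v ∈ e, v ∈ W) (hζ : ∀ e ∈ ζ, ∀ v ∈ e, v ∉ W)
    (hv : v ∈ W) : cluster (η ∪ ζ) v = cluster η v := by
  ext u
  simp only [mem_cluster]
  refine ⟨fun h => ?_, Linked.mono subset_union_left⟩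
  induction h with
  | refl => exact .refl η v
  | @tail b c _ hbc ih =>
    rcases mem_union.1 hbc with hbc | hbc
    · exact ih.trans (.of_mem hbc)
    · exact absurd (ih.mem_of_mem hη hv) (hζ _ hbc b (Sym2.mem_mk_left b c))

lemma cluster_union_of_notMem (hη : ∀ e ∈ η, ∀ v ∈ e, v ∈ W) (hζ : ∀ e ∈ ζ, ∀ v ∈ e, v ∉ W)
    (hv : v ∉ W) : cluster (η ∪ ζ) v = cluster ζ v := by
  rw [union_comm]
  exact cluster_union_of_mem (W := Wᶜ) (by simpa using hζ) (by simpa using hη) (by simpa using hv)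

lemma clusters_union (hη : ∀ e ∈ η, ∀ v ∈ e, v ∈ W) (hζ : ∀ e ∈ ζ, ∀ v ∈ e, v ∉ W) :
    clusters (η ∪ ζ) = W.image (cluster η) ∪ Wᶜ.image (cluster ζ) := by
  rw [clusters, ← union_compl W, image_union]
  congr 1
  · exact image_congr fun v hv => cluster_union_of_mem hη hζ hv
  · exact image_congr fun v hv => cluster_union_of_notMem hη hζ (mem_compl.1 hv)

lemma disjoint_image_cluster (hζ : ∀ e ∈ ζ, ∀ v ∈ e, v ∉ W) :
    Disjoint (W.image (cluster η)) (Wᶜ.image (cluster ζ)) := by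
  simp only [disjoint_left, mem_image, mem_compl, not_exists, not_and]
  rintro _ ⟨v, hv, rfl⟩ u hu huv
  have : v ∈ cluster ζ u := huv ▸ mem_cluster_self
  exact cluster_subset (W := Wᶜ) (by simpa using hζ) (mem_compl.2 hu) this |> mem_compl.1 <| hv

variable {M : Type*} [CommMonoid M] (w : Finset V → M)

lemma clusterProd_union (hη : ∀ e ∈ η, ∀ v ∈ e, v ∈ W) (hζ : ∀ e ∈ ζ, ∀ v ∈ e, v ∉ W) :
    clusterProd w (η ∪ ζ) = (∏ C ∈ W.image (cluster η), w C) * ∏ C ∈ Wᶜ.image (cluster ζ), w C := by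
  rw [clusterProd, clusters_union hη hζ, prod_union (disjoint_image_cluster hζ)]

lemma clusterProd_union_mul_prod_singleton (hη : ∀ e ∈ η, ∀ v ∈ e, v ∈ W)
    (hζ : ∀ e ∈ ζ, ∀ v ∈ e, v ∉ W) :
    clusterProd w (η ∪ ζ) * ∏ v, w {v} = clusterProd w η * clusterProd w ζ := by
  have hsingle : ∀ s : Finset V, ∏ C ∈ s.image (cluster ∅), w C = ∏ v ∈ s, w {v} := fun s => by
    rw [image_congr fun v _ => cluster_empty v, prod_image fun _ _ _ _ h => singleton_injective h]
  have hη' := clusterProd_union w hη (ζ := ∅) (by simp)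
  have hζ' := clusterProd_union w (η := ∅) (by simp) hζ
  rw [union_empty] at hη'
  rw [empty_union] at hζ'
  rw [hη', hζ', hsingle, hsingle, clusterProd_union w hη hζ, ← prod_mul_prod_compl W]
  ac_rfl

lemma prod_image_cluster_eq_one (hη : ∀ e ∈ η, ∀ v ∈ e, v ∈ W) (hw : ∀ C ⊆ W, w C = 1) :
    ∏ C ∈ W.image (cluster η), w C = 1 :=
  prod_eq_one <| by
    simp only [mem_image]
    rintro _ ⟨v, hv, rfl⟩
    exact hw _ (cluster_subset hη hv)

lemma clusterProd_union_eq_right (hη : ∀ e ∈ η, ∀ v ∈ e, v ∈ W) (hζ : ∀ e ∈ ζ, ∀ v ∈ e, v ∉ W)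
    (hw : ∀ C ⊆ W, w C = 1) : clusterProd w (η ∪ ζ) = clusterProd w ζ := by
  have hζ' := clusterProd_union w (η := ∅) (by simp) hζ
  rw [empty_union] at hζ'
  rw [hζ', clusterProd_union w hη hζ, prod_image_cluster_eq_one w hη hw,
    prod_image_cluster_eq_one w (by simp) hw]

lemma clusterProd_union_eq_left (hη : ∀ e ∈ η, ∀ v ∈ e, v ∈ W) (hζ : ∀ e ∈ ζ, ∀ v ∈ e, v ∉ W)
    (hw : ∀ C ⊆ Wᶜ, w C = 1) : clusterProd w (η ∪ ζ) = clusterProd w η := by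
  rw [union_comm]
  exact clusterProd_union_eq_right w (by simpa using hζ) (by simpa using hη) hw

end Split

section Territory

def innerEdges (S : Finset V) (ω : Finset (Sym2 V)) : Finset (Sym2 V) :=
  {e ∈ ω | ∀ v ∈ e, v ∈ territory S ω}

def outerEdges (S : Finset V) (ω : Finset (Sym2 V)) : Finset (Sym2 V) :=
  {e ∈ ω | ∀ v ∈ e, v ∉ territory S ω}

lemma innerEdges_union_outerEdges : innerEdges S ω ∪ outerEdges S ω = ω := by
  ext e
  simp only [innerEdges, outerEdges, mem_union, mem_filter, ← and_or_left, and_iff_left_iff_imp]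
  intro he
  induction e using Sym2.ind with
  | _ x y =>
    have hxy : Linked ω x y := .of_mem he
    simp only [Sym2.mem_iff, forall_eq_or_imp, forall_eq]
    by_cases hx : x ∈ territory S ω
    · exact Or.inl ⟨hx, hxy.mem_territory hx⟩
    · exact Or.inr ⟨hx, fun hy => hx (hxy.symm.mem_territory hy)⟩

lemma territory_union (hS : S ⊆ W) (hη : ∀ e ∈ η, ∀ v ∈ e, v ∈ W)
    (hζ : ∀ e ∈ ζ, ∀ v ∈ e, v ∉ W) : territory S (η ∪ ζ) = territory S η := by
  ext v
  simp only [mem_territory]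
  refine exists_congr fun s => and_congr_right fun hs => ?_
  rw [← mem_cluster, ← mem_cluster, cluster_union_of_mem hη hζ (hS hs)]

lemma territory_innerEdges : territory S (innerEdges S ω) = territory S ω := by
  conv_rhs => rw [← innerEdges_union_outerEdges (S := S) (ω := ω)]
  refine (territory_union (W := territory S ω) subset_territory ?_ ?_).symm <;>
    exact fun e he => (mem_filter.1 he).2

lemma innerEdges_union (hη : ∀ e ∈ η, ∀ v ∈ e, v ∈ territory S η)
    (hζ : ∀ e ∈ ζ, ∀ v ∈ e, v ∉ territory S η) :
    innerEdges S (η ∪ ζ) = η ∧ outerEdges S (η ∪ ζ) = ζ := by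
  have hT := territory_union subset_territory hη hζ
  simp only [innerEdges, outerEdges, filter_union, hT]
  constructor
  · rw [filter_true_of_mem hη, filter_false_of_mem, union_empty]
    exact fun e he h => hζ e he _ e.out_fst_mem (h _ e.out_fst_mem)
  · rw [filter_true_of_mem hζ, filter_false_of_mem, empty_union]
    exact fun e he h => h _ e.out_fst_mem (hη e he _ e.out_fst_mem)

lemma sum_powerset_eq_sum_innerEdges {β : Type*} [AddCommMonoid β] (E : Finset (Sym2 V))
    (G : Finset (Sym2 V) → β) :
    ∑ ω ∈ E.powerset, G ω = ∑ η ∈ E.powerset.image (innerEdges S),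
      ∑ ζ ∈ {e ∈ E | ∀ v ∈ e, v ∉ territory S η}.powerset, G (η ∪ ζ) := by
  rw [sum_sigma']
  refine sum_nbij' (fun ω => ⟨innerEdges S ω, outerEdges S ω⟩) (fun p => p.1 ∪ p.2)
    ?_ ?_ (fun ω _ => innerEdges_union_outerEdges) ?_
    (fun ω _ => by rw [innerEdges_union_outerEdges])
  · intro ω hω
    simp only [mem_sigma, mem_image, mem_powerset, territory_innerEdges]
    refine ⟨⟨ω, mem_powerset.1 hω, rfl⟩, fun e he => ?_⟩
    obtain ⟨heω, he⟩ := mem_filter.1 he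
    exact mem_filter.2 ⟨mem_powerset.1 hω heω, he⟩
  · rintro ⟨η, ζ⟩ hp
    simp only [mem_sigma, mem_image, mem_powerset] at hp ⊢
    obtain ⟨⟨ω, hωE, rfl⟩, hζ⟩ := hp
    exact union_subset ((filter_subset _ _).trans hωE) (hζ.trans (filter_subset _ _))
  · rintro ⟨η, ζ⟩ hp
    simp only [mem_sigma, mem_image, mem_powerset] at hp
    obtain ⟨⟨ω, -, rfl⟩, hζ⟩ := hp
    have hin : ∀ e ∈ innerEdges S ω, ∀ v ∈ e, v ∈ territory S (innerEdges S ω) := by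
      rw [territory_innerEdges]
      exact fun e he => (mem_filter.1 he).2
    obtain ⟨h₁, h₂⟩ := innerEdges_union hin fun e he => (mem_filter.1 (hζ he)).2
    rw [h₁, h₂]

/-- The spin average of `f₀ ^ #(C ∩ R) * f₁ ^ #(C ∩ S)` on a cluster `C` when `f₀ * f₁ = 0`, in
terms of the averages `w₀ C` and `w₁ C` of the two factors. -/
def jointWeight {M : Type*} [MulZeroClass M] (R S : Finset V) (w₀ w₁ : Finset V → M)
    (C : Finset V) : M :=
  if Disjoint C R ∨ Disjoint C S then w₀ C * w₁ C else 0

lemma clusterProd_jointWeight {M : Type*} [CommMonoidWithZero M] (w₀ w₁ : Finset V → M)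
    (R : Finset V) (ω : Finset (Sym2 V)) :
    clusterProd (jointWeight R S w₀ w₁) ω =
      if Disjoint (territory S ω) R then clusterProd w₀ ω * clusterProd w₁ ω else 0 := by
  split_ifs with h
  · rw [clusterProd, clusterProd, clusterProd, ← prod_mul_distrib]
    refine prod_congr rfl fun C hC => if_pos ?_
    obtain ⟨v, rfl⟩ := mem_clusters.1 hC
    by_contra hc
    simp only [not_or, not_disjoint_iff, mem_cluster] at hc
    obtain ⟨⟨r, hvr, hr⟩, ⟨s, hvs, hs⟩⟩ := hc
    exact disjoint_left.1 h (mem_territory.2 ⟨s, hs, hvs.symm.trans hvr⟩) hr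
  · obtain ⟨r, hrT, hr⟩ := not_disjoint_iff.1 h
    obtain ⟨s, hs, hsr⟩ := mem_territory.1 hrT
    refine prod_eq_zero (cluster_mem_clusters ω s) (if_neg ?_)
    simp only [not_or, not_disjoint_iff]
    exact ⟨⟨r, mem_cluster.2 hsr, hr⟩, ⟨s, mem_cluster_self, hs⟩⟩

end Territory

section RandomCluster

variable (q : ℝ) (lam : Sym2 V → ℝ)

def rcWeight (ω : Finset (Sym2 V)) : ℝ := (∏ e ∈ ω, lam e) * q ^ numClusters ω

/-- `rcSum q lam F X / rcSum q lam F 1` is the expectation of `X` under the random-cluster measure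
on the edge set `F` with edge weights `lam` and cluster weight `q`. -/
def rcSum (F : Finset (Sym2 V)) (X : Finset (Sym2 V) → ℝ) : ℝ :=
  ∑ ω ∈ F.powerset, rcWeight q lam ω * X ω

variable {q lam} {E F a b : Finset (Sym2 V)}

lemma rcWeight_nonneg (hq : 0 ≤ q) (hlam : ∀ e ∈ E, 0 ≤ lam e) (hω : ω ⊆ E) :
    0 ≤ rcWeight q lam ω :=
  mul_nonneg (prod_nonneg fun e he => hlam e (hω he)) (pow_nonneg hq _)

lemma rcSum_one_pos (hq : 0 < q) (hlam : ∀ e ∈ E, 0 ≤ lam e) : 0 < rcSum q lam E 1 := by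
  refine sum_pos' (fun ω hω => ?_) ⟨∅, empty_mem_powerset E, ?_⟩
  · simpa using rcWeight_nonneg hq.le hlam (mem_powerset.1 hω)
  · simpa [rcWeight] using pow_pos hq _

lemma rcWeight_mul_rcWeight_le (hq : 1 ≤ q) (hlam : ∀ e ∈ E, 0 ≤ lam e) (ha : a ⊆ E)
    (hb : b ⊆ E) :
    rcWeight q lam a * rcWeight q lam b ≤ rcWeight q lam (a ∩ b) * rcWeight q lam (a ∪ b) := by
  have hprod : (∏ e ∈ a, lam e) * ∏ e ∈ b, lam e = (∏ e ∈ a ∩ b, lam e) * ∏ e ∈ a ∪ b, lam e := by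
    rw [mul_comm (∏ e ∈ a ∩ b, lam e), prod_union_inter]
  have hpow : q ^ numClusters a * q ^ numClusters b ≤
      q ^ numClusters (a ∩ b) * q ^ numClusters (a ∪ b) := by
    rw [← pow_add, ← pow_add]
    exact pow_le_pow_right₀ hq (numClusters_add_numClusters_le a b)
  calc rcWeight q lam a * rcWeight q lam b
      = ((∏ e ∈ a, lam e) * ∏ e ∈ b, lam e) * (q ^ numClusters a * q ^ numClusters b) := by
        rw [rcWeight, rcWeight]; ring
    _ ≤ ((∏ e ∈ a ∩ b, lam e) * ∏ e ∈ a ∪ b, lam e) *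
        (q ^ numClusters (a ∩ b) * q ^ numClusters (a ∪ b)) := by
        rw [hprod]
        exact mul_le_mul_of_nonneg_left hpow (mul_nonneg
          (prod_nonneg fun e he => hlam e (ha (mem_of_mem_inter_left he)))
          (prod_nonneg fun e he => hlam e ((union_subset ha hb) he)))
    _ = rcWeight q lam (a ∩ b) * rcWeight q lam (a ∪ b) := by rw [rcWeight, rcWeight]; ring

lemma rcSum_eq_sum_univ (X : Finset (Sym2 V) → ℝ) :
    rcSum q lam E X = ∑ ω, (if ω ⊆ E then rcWeight q lam ω else 0) * X ω := by
  simp only [ite_mul, zero_mul, ← sum_filter, filter_subset_univ, rcSum]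

lemma rcSum_sub_rcSum_of_subset (hFE : F ⊆ E) (X : Finset (Sym2 V) → ℝ) :
    rcSum q lam E X - rcSum q lam F X = rcSum q lam E fun ω => if ω ⊆ F then 0 else X ω := by
  have hF : {ω ∈ E.powerset | ω ⊆ F} = F.powerset := by
    ext ω
    simpa using fun h : ω ⊆ F => h.trans hFE
  rw [rcSum, rcSum, rcSum, ← sum_filter_add_sum_filter_not E.powerset (· ⊆ F), hF,
    add_sub_cancel_left, sum_filter]
  refine sum_congr rfl fun ω _ => ?_
  split_ifs <;> simp

lemma rcSum_mul_rcSum_le (hq : 1 ≤ q) (hlam : ∀ e ∈ E, 0 ≤ lam e) {X Y : Finset (Sym2 V) → ℝ}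
    (hX₀ : 0 ≤ X) (hY₀ : 0 ≤ Y) (hX : Monotone X) (hY : Monotone Y) :
    rcSum q lam E X * rcSum q lam E Y ≤ rcSum q lam E 1 * rcSum q lam E (X * Y) := by
  set μ : Finset (Sym2 V) → ℝ := fun ω => if ω ⊆ E then rcWeight q lam ω else 0
  have hμ₀ : 0 ≤ μ := fun ω => by
    by_cases hω : ω ⊆ E
    · simpa [μ, hω] using rcWeight_nonneg (by linarith) hlam hω
    · simp [μ, hω]
  have hμ : ∀ a b, μ a * μ b ≤ μ (a ⊓ b) * μ (a ⊔ b) := fun a b => by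
    by_cases hab : a ⊆ E ∧ b ⊆ E
    · simpa [μ, hab.1, hab.2, inter_subset_left.trans hab.1, union_subset hab.1 hab.2]
        using rcWeight_mul_rcWeight_le hq hlam hab.1 hab.2
    · have : μ a * μ b = 0 := by
        rcases not_and_or.1 hab with h | h <;> simp [μ, h]
      rw [this]
      exact mul_nonneg (hμ₀ _) (hμ₀ _)
  have hsum : ∀ Z, ∑ ω, μ ω * Z ω = rcSum q lam E Z := fun Z => (rcSum_eq_sum_univ Z).symm
  have hZ : ∑ ω, μ ω = rcSum q lam E 1 := by simpa using hsum 1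
  have h := fkg X Y μ hμ₀ hX₀ hY₀ hX hY hμ
  rw [hsum, hsum, hsum, hZ] at h
  exact h

/-- The random-cluster expectation of an increasing function increases with the edge set. -/
lemma rcSum_mul_rcSum_one_le (hq : 1 ≤ q) (hlam : ∀ e ∈ E, 0 ≤ lam e) (hFE : F ⊆ E)
    {X : Finset (Sym2 V) → ℝ} (hX₀ : 0 ≤ X) (hX : Monotone X) :
    rcSum q lam F X * rcSum q lam E 1 ≤ rcSum q lam E X * rcSum q lam F 1 := by
  set Y : Finset (Sym2 V) → ℝ := fun ω => if ω ⊆ F then 0 else 1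
  have hY₀ : 0 ≤ Y := fun ω => by by_cases h : ω ⊆ F <;> simp [Y, h]
  have hY : Monotone Y := fun a b hab => by
    by_cases hb : b ⊆ F
    · simp [Y, hb, hab.trans hb]
    · by_cases ha : a ⊆ F <;> simp [Y, ha, hb]
  have h := rcSum_mul_rcSum_le hq hlam hX₀ hY₀ hX hY
  have hEY : rcSum q lam E Y = rcSum q lam E 1 - rcSum q lam F 1 := by
    rw [rcSum_sub_rcSum_of_subset hFE]; rfl
  have hEXY : rcSum q lam E (X * Y) = rcSum q lam E X - rcSum q lam F X := by
    rw [rcSum_sub_rcSum_of_subset hFE]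
    congr 1
    funext ω
    by_cases h : ω ⊆ F <;> simp [Y, h]
  rw [hEY, hEXY] at h
  linarith

end RandomCluster

section Correlation

variable {q : ℝ} {lam : Sym2 V → ℝ} {E F : Finset (Sym2 V)} {R : Finset V}

lemma rcWeight_union (hη : ∀ e ∈ η, ∀ v ∈ e, v ∈ W) (hζ : ∀ e ∈ ζ, ∀ v ∈ e, v ∉ W) :
    rcWeight q lam (η ∪ ζ) * q ^ Fintype.card V = rcWeight q lam η * rcWeight q lam ζ := by
  have h := clusterProd_union_mul_prod_singleton (fun _ => q) hη hζ
  simp only [clusterProd_const, prod_const, card_univ] at h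
  rw [rcWeight, rcWeight, rcWeight, prod_union (disjoint_of_forall_mem_of_forall_notMem hη hζ)]
  linear_combination (∏ e ∈ η, lam e) * (∏ e ∈ ζ, lam e) * h

lemma sum_rcWeight_union_mul (hη : ∀ e ∈ η, ∀ v ∈ e, v ∈ W) (hF : ∀ e ∈ F, ∀ v ∈ e, v ∉ W)
    (X : Finset (Sym2 V) → ℝ) :
    (∑ ζ ∈ F.powerset, rcWeight q lam (η ∪ ζ) * X (η ∪ ζ)) * q ^ Fintype.card V =
      rcWeight q lam η * rcSum q lam F fun ζ => X (η ∪ ζ) := by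
  rw [rcSum, sum_mul, mul_sum]
  refine sum_congr rfl fun ζ hζ => ?_
  rw [mul_right_comm, rcWeight_union hη fun e he => hF e (mem_powerset.1 hζ he), mul_assoc]

variable {w₀ w₁ : Finset V → ℝ} (hq : 1 ≤ q) (hlam : ∀ e ∈ E, 0 ≤ lam e)
  (hw₀ : ∀ C, 0 ≤ w₀ C) (hsup : ∀ A B, Disjoint A B → w₀ A * w₀ B ≤ w₀ (A ∪ B))
  (hR : ∀ C, Disjoint C R → w₀ C = 1) (hw₁ : ∀ C, 0 ≤ w₁ C) (hS : ∀ C, Disjoint C S → w₁ C = 1)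
include hq hlam hw₀ hsup hR hw₁ hS

/-- Given the clusters of `S` (their edges `η`), the rest of the configuration is a random-cluster
configuration on the edges off `territory S η`, and on it only the `w₀`-weight still varies. -/
lemma sum_fiber_mul_rcSum_one_le (hηE : η ⊆ E) (hη : ∀ e ∈ η, ∀ v ∈ e, v ∈ territory S η) :
    (∑ ζ ∈ {e ∈ E | ∀ v ∈ e, v ∉ territory S η}.powerset,
        rcWeight q lam (η ∪ ζ) * clusterProd (jointWeight R S w₀ w₁) (η ∪ ζ)) * rcSum q lam E 1 ≤
      rcSum q lam E (clusterProd w₀) *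
        ∑ ζ ∈ {e ∈ E | ∀ v ∈ e, v ∉ territory S η}.powerset,
          rcWeight q lam (η ∪ ζ) * clusterProd w₁ (η ∪ ζ) := by
  set W := territory S η
  set F := {e ∈ E | ∀ v ∈ e, v ∉ W}
  have hFE : F ⊆ E := filter_subset _ _
  have hF : ∀ e ∈ F, ∀ v ∈ e, v ∉ W := fun e he => (mem_filter.1 he).2
  have hζ : ∀ ζ ∈ F.powerset, ∀ e ∈ ζ, ∀ v ∈ e, v ∉ W :=
    fun ζ hζ e he => hF e (mem_powerset.1 hζ he)
  have hT : ∀ ζ ∈ F.powerset, territory S (η ∪ ζ) = W :=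
    fun ζ h => territory_union subset_territory hη (hζ ζ h)
  have hq₀ : 0 ≤ q := by linarith
  by_cases hWR : Disjoint W R
  · have h₀ : ∀ ζ ∈ F.powerset, clusterProd w₀ (η ∪ ζ) = clusterProd w₀ ζ := fun ζ h =>
      clusterProd_union_eq_right w₀ hη (hζ ζ h) fun C hC => hR C (disjoint_of_subset_left hC hWR)
    have h₁ : ∀ ζ ∈ F.powerset, clusterProd w₁ (η ∪ ζ) = clusterProd w₁ η := fun ζ h =>
      clusterProd_union_eq_left w₁ hη (hζ ζ h) fun C hC =>
        hS C (disjoint_of_subset_left hC (disjoint_compl_left.mono_right subset_territory))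
    have hL : (∑ ζ ∈ F.powerset, rcWeight q lam (η ∪ ζ) *
        clusterProd (jointWeight R S w₀ w₁) (η ∪ ζ)) * q ^ Fintype.card V =
          rcWeight q lam η * (clusterProd w₁ η * rcSum q lam F (clusterProd w₀)) := by
      rw [sum_rcWeight_union_mul hη hF]
      congr 1
      rw [rcSum, rcSum, mul_sum]
      refine sum_congr rfl fun ζ h => ?_
      rw [clusterProd_jointWeight, hT ζ h, if_pos hWR, h₀ ζ h, h₁ ζ h]
      ring
    have hR₁ : (∑ ζ ∈ F.powerset, rcWeight q lam (η ∪ ζ) * clusterProd w₁ (η ∪ ζ)) *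
        q ^ Fintype.card V = rcWeight q lam η * (clusterProd w₁ η * rcSum q lam F 1) := by
      rw [sum_rcWeight_union_mul hη hF]
      congr 1
      rw [rcSum, rcSum, mul_sum]
      refine sum_congr rfl fun ζ h => ?_
      rw [h₁ ζ h, Pi.one_apply]
      ring
    have hmono := mul_le_mul_of_nonneg_left (rcSum_mul_rcSum_one_le (X := clusterProd w₀) hq hlam
      hFE (clusterProd_nonneg hw₀) (clusterProd_mono hw₀ hsup))
      (mul_nonneg (rcWeight_nonneg hq₀ hlam hηE) (clusterProd_nonneg hw₁ η))
    refine le_of_mul_le_mul_right ?_ (pow_pos (by linarith : 0 < q) (Fintype.card V))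
    linear_combination hmono + rcSum q lam E 1 * hL - rcSum q lam E (clusterProd w₀) * hR₁
  · rw [sum_eq_zero fun ζ h => by
      rw [clusterProd_jointWeight, hT ζ h, if_neg hWR, mul_zero], zero_mul]
    refine mul_nonneg (sum_nonneg fun ω hω => mul_nonneg ?_ (clusterProd_nonneg hw₀ _))
      (sum_nonneg fun ζ h => mul_nonneg ?_ (clusterProd_nonneg hw₁ _))
    · exact rcWeight_nonneg hq₀ hlam (mem_powerset.1 hω)
    · exact rcWeight_nonneg hq₀ hlam (union_subset hηE ((mem_powerset.1 h).trans hFE))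

theorem rcSum_clusterProd_jointWeight_mul_le :
    rcSum q lam E (clusterProd (jointWeight R S w₀ w₁)) * rcSum q lam E 1 ≤
      rcSum q lam E (clusterProd w₀) * rcSum q lam E (clusterProd w₁) := by
  unfold rcSum
  rw [sum_powerset_eq_sum_innerEdges (S := S) E, sum_powerset_eq_sum_innerEdges (S := S) E
    (fun ω => rcWeight q lam ω * clusterProd w₁ ω), sum_mul, mul_sum]
  refine sum_le_sum fun η hη => ?_
  obtain ⟨ω, hω, rfl⟩ := mem_image.1 hη
  refine sum_fiber_mul_rcSum_one_le hq hlam hw₀ hsup hR hw₁ hS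
    ((filter_subset _ _).trans (mem_powerset.1 hω)) ?_
  rw [territory_innerEdges]
  exact fun e he => (mem_filter.1 he).2

end Correlation

section Potts

variable {q : ℕ} (E : Finset (Sym2 V)) (J : Sym2 V → ℝ)

omit [DecidableEq V] in
lemma prod_edgeDelta (ω : Finset (Sym2 V)) (σ : V → Fin q) :
    ∏ e ∈ ω, edgeDelta σ e = if ∀ u v, Linked ω u v → σ u = σ v then 1 else 0 := by
  split_ifs with h
  · refine prod_eq_one fun e he => ?_
    induction e using Sym2.ind with
    | _ x y => simp [edgeDelta, h x y (.of_mem he)]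
  · have : ¬ ∀ x y, s(x, y) ∈ ω → σ x = σ y := fun hσ => h fun u v huv => huv.apply_eq hσ
    simp only [not_forall] at this
    obtain ⟨x, y, hxy, hne⟩ := this
    exact prod_eq_zero hxy (by simp [edgeDelta, hne])

lemma pottsWeight_zero_field [NeZero q] (σ : V → Fin q) :
    pottsWeight q E J (fun _ => 0) σ = ∑ ω ∈ E.powerset, (∏ e ∈ ω, (Real.exp (J e) - 1)) *
      if ∀ u v, Linked ω u v → σ u = σ v then 1 else 0 := by
  have hexp : ∀ e, Real.exp (J e * edgeDelta σ e) = (Real.exp (J e) - 1) * edgeDelta σ e + 1 := by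
    intro e
    induction e using Sym2.ind with
    | _ x y => by_cases h : σ x = σ y <;> simp [edgeDelta, h]
  simp only [pottsWeight, zero_mul, sum_const_zero, add_zero, Real.exp_sum, hexp, prod_add,
    prod_const_one, mul_one, prod_mul_distrib, prod_edgeDelta]

lemma sum_pottsWeight_mul_prod [NeZero q] (g : V → Fin q → ℂ) :
    ∑ σ : V → Fin q, (pottsWeight q E J (fun _ => 0) σ : ℂ) * ∏ v, g v (σ v) =
      ∑ ω ∈ E.powerset, ((∏ e ∈ ω, (Real.exp (J e) - 1) : ℝ) : ℂ) *
        ∏ C ∈ clusters ω, ∑ x, ∏ v ∈ C, g v x := by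
  simp_rw [pottsWeight_zero_field, Complex.ofReal_sum, Complex.ofReal_mul, sum_mul, mul_assoc]
  rw [sum_comm]
  refine sum_congr rfl fun ω _ => ?_
  rw [← mul_sum, ← sum_linked_prod ω g, sum_filter]
  congr 1
  refine sum_congr rfl fun σ _ => ?_
  split_ifs <;> simp

lemma sum_pottsWeight_mul_prod_eq_rcSum [NeZero q] (g : V → Fin q → ℂ) (u : Finset V → ℝ)
    (hg : ∀ C, ∑ x, ∏ v ∈ C, g v x = ((q * u C : ℝ) : ℂ)) :
    ∑ σ : V → Fin q, (pottsWeight q E J (fun _ => 0) σ : ℂ) * ∏ v, g v (σ v) =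
      (rcSum q (fun e => Real.exp (J e) - 1) E (clusterProd u) : ℂ) := by
  rw [sum_pottsWeight_mul_prod, rcSum, Complex.ofReal_sum]
  refine sum_congr rfl fun ω _ => ?_
  rw [prod_congr rfl fun C _ => hg C, ← Complex.ofReal_prod, prod_mul_distrib, prod_const]
  simp only [rcWeight, clusterProd, numClusters]
  push_cast
  ring

lemma pottsZ_zero_field [NeZero q] :
    pottsZ q E J (fun _ => 0) = rcSum q (fun e => Real.exp (J e) - 1) E 1 := by
  have h := sum_pottsWeight_mul_prod_eq_rcSum (q := q) E J (fun _ _ => 1) 1 fun C => by simp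
  have h1 : clusterProd (1 : Finset V → ℝ) = 1 := funext fun _ => prod_const_one
  simp only [prod_const_one, mul_one, h1] at h
  exact_mod_cast h

lemma sum_pottsPMF_mul_prod [NeZero q] (g : V → Fin q → ℂ) (u : Finset V → ℝ)
    (hg : ∀ C, ∑ x, ∏ v ∈ C, g v x = ((q * u C : ℝ) : ℂ)) :
    ∑ σ : V → Fin q, (pottsPMF q E J (fun _ => 0) σ : ℂ) * ∏ v, g v (σ v) =
      ((rcSum q (fun e => Real.exp (J e) - 1) E (clusterProd u) /
        rcSum q (fun e => Real.exp (J e) - 1) E 1 : ℝ) : ℂ) := by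
  simp only [pottsPMF, Complex.ofReal_div, div_mul_eq_mul_div, ← sum_div,
    sum_pottsWeight_mul_prod_eq_rcSum E J g u hg, pottsZ_zero_field]

def clusterMoment (q : ℕ) (f : Fin q → ℂ) (R C : Finset V) : ℝ := (powerMean q f #(C ∩ R)).re

variable [NeZero q] {f f₀ f₁ : Fin q → ℂ} {R S C : Finset V}

lemma powerMean_zero (f : Fin q → ℂ) : powerMean q f 0 = 1 := by
  simp [powerMean, NeZero.ne q]

lemma sum_pow_eq_of_im_eq_zero {n : ℕ} (hf : (powerMean q f n).im = 0) :
    ∑ x, f x ^ n = ((q * (powerMean q f n).re : ℝ) : ℂ) := by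
  have hre : ((powerMean q f n).re : ℂ) = powerMean q f n :=
    Complex.ext rfl (by simpa using hf.symm)
  rw [Complex.ofReal_mul, hre, powerMean, Complex.ofReal_natCast,
    mul_div_cancel₀ _ (by simp [NeZero.ne q])]

omit [Fintype V] in
lemma clusterMoment_of_disjoint (h : Disjoint C R) : clusterMoment q f R C = 1 := by
  simp [clusterMoment, disjoint_iff_inter_eq_empty.1 h, powerMean_zero]

omit [Fintype V] [NeZero q] in
lemma clusterMoment_mul_le (hf : memF q f) {A B : Finset V} (hAB : Disjoint A B) :
    clusterMoment q f R A * clusterMoment q f R B ≤ clusterMoment q f R (A ∪ B) := by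
  have hcard : #((A ∪ B) ∩ R) = #(A ∩ R) + #(B ∩ R) := by
    rw [union_inter_distrib_right,
      card_union_of_disjoint (hAB.mono inter_subset_left inter_subset_left)]
  simpa only [clusterMoment, hcard] using hf.2 _ _

lemma pottsMean_zero_field (hf : ∀ m, (powerMean q f m).im = 0) :
    pottsMean q E J (fun _ => 0) f R =
      ((rcSum q (fun e => Real.exp (J e) - 1) E (clusterProd (clusterMoment q f R)) /
        rcSum q (fun e => Real.exp (J e) - 1) E 1 : ℝ) : ℂ) := by
  rw [pottsMean, ← sum_pottsPMF_mul_prod E J (fun v x => if v ∈ R then f x else 1) _ fun C => by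
    simp only [prod_ite_mem, prod_const, sum_pow_eq_of_im_eq_zero (hf _), clusterMoment]]
  exact sum_congr rfl fun σ _ => by rw [Fintype.prod_ite_mem]

omit [Fintype V] in
lemma sum_prod_ite_mul_ite (hf₀ : ∀ m, (powerMean q f₀ m).im = 0)
    (hf₁ : ∀ m, (powerMean q f₁ m).im = 0) (hdisj : ∀ x, f₀ x * f₁ x = 0) (C : Finset V) :
    ∑ x, ∏ v ∈ C, ((if v ∈ R then f₀ x else 1) * if v ∈ S then f₁ x else 1) =
      ((q * jointWeight R S (clusterMoment q f₀ R) (clusterMoment q f₁ S) C : ℝ) : ℂ) := by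
  simp only [prod_mul_distrib, prod_ite_mem, prod_const, jointWeight]
  split_ifs with h
  · rcases h with h | h
    · rw [clusterMoment_of_disjoint h, one_mul, clusterMoment, ← sum_pow_eq_of_im_eq_zero (hf₁ _)]
      simp [disjoint_iff_inter_eq_empty.1 h]
    · rw [clusterMoment_of_disjoint h, mul_one, clusterMoment, ← sum_pow_eq_of_im_eq_zero (hf₀ _)]
      simp [disjoint_iff_inter_eq_empty.1 h]
  · simp only [not_or, not_disjoint_iff_nonempty_inter] at h
    rw [mul_zero, Complex.ofReal_zero]
    refine sum_eq_zero fun x _ => ?_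
    rcases mul_eq_zero.1 (hdisj x) with h0 | h0
    · simp [h0, h.1.ne_empty]
    · simp [h0, h.2.ne_empty]

lemma pottsMean2_zero_field (hf₀ : ∀ m, (powerMean q f₀ m).im = 0)
    (hf₁ : ∀ m, (powerMean q f₁ m).im = 0) (hdisj : ∀ x, f₀ x * f₁ x = 0) :
    pottsMean2 q E J (fun _ => 0) f₀ f₁ R S =
      ((rcSum q (fun e => Real.exp (J e) - 1) E
          (clusterProd (jointWeight R S (clusterMoment q f₀ R) (clusterMoment q f₁ S))) /
        rcSum q (fun e => Real.exp (J e) - 1) E 1 : ℝ) : ℂ) := by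
  rw [pottsMean2, ← sum_pottsPMF_mul_prod E J _ _ (sum_prod_ite_mul_ite hf₀ hf₁ hdisj)]
  exact sum_congr rfl fun σ _ => by
    rw [prod_mul_distrib, Fintype.prod_ite_mem, Fintype.prod_ite_mem]

end Potts

end PottsFK

open PottsFK in
theorem pottsMean_negative_correlation_zero_field_general
    (q : ℕ) [NeZero q]
    (E : Finset (Sym2 V))
    (J : Sym2 V → ℝ) (hJ : ∀ e ∈ E, 0 ≤ J e)
    (f₀ f₁ : Fin q → ℂ) (hf₀ : memF q f₀)
    (hf₁ : ∀ m : ℕ, (powerMean q f₁ m).im = 0 ∧ 0 ≤ (powerMean q f₁ m).re)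
    (hdisj : ∀ x : Fin q, f₀ x * f₁ x = 0) (R S : Finset V) :
    (pottsMean2 q E J (fun _ => 0) f₀ f₁ R S).re ≤
      (pottsMean q E J (fun _ => 0) f₀ R).re *
        (pottsMean q E J (fun _ => 0) f₁ S).re := by
  have hq : (1 : ℝ) ≤ q := Nat.one_le_cast.2 (Nat.one_le_iff_ne_zero.2 (NeZero.ne q))
  have hlam : ∀ e ∈ E, 0 ≤ Real.exp (J e) - 1 := fun e he =>
    sub_nonneg.2 (Real.one_le_exp (hJ e he))
  have hZ := rcSum_one_pos (by linarith) hlam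
  have key := rcSum_clusterProd_jointWeight_mul_le (w₀ := clusterMoment q f₀ R)
    (w₁ := clusterMoment q f₁ S) hq hlam (fun _ => (hf₀.1 _).2)
    (fun _ _ => clusterMoment_mul_le hf₀) (fun _ => clusterMoment_of_disjoint) (fun _ => (hf₁ _).2)
    (fun _ => clusterMoment_of_disjoint)
  rw [pottsMean2_zero_field E J (fun m => (hf₀.1 m).1) (fun m => (hf₁ m).1) hdisj,
    pottsMean_zero_field E J (fun m => (hf₀.1 m).1), pottsMean_zero_field E J (fun m => (hf₁ m).1)]
  simp only [Complex.ofReal_re]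
  rw [div_mul_div_comm, div_le_div_iff₀ hZ (mul_pos hZ hZ), ← mul_assoc]
  exact mul_le_mul_of_nonneg_right key hZ.le

/-- Schonmann-type negative correlation with zero external field: it suffices that
`f₀ ∈ F_q` (membership in `F_q^0` is not required). -/
theorem pottsMean_negative_correlation_zero_field
    (q : ℕ) [NeZero q] (hq : 2 ≤ q)
    (E : Finset (Sym2 V)) (hE : ∀ e ∈ E, ¬ e.IsDiag)
    (J : Sym2 V → ℝ) (hJ : ∀ e ∈ E, 0 ≤ J e)
    (f₀ f₁ : Fin q → ℂ) (hf₀ : memF q f₀)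
    (hf₁ : ∀ m : ℕ, (powerMean q f₁ m).im = 0 ∧ 0 ≤ (powerMean q f₁ m).re)
    (hdisj : ∀ x : Fin q, f₀ x * f₁ x = 0) (R S : Finset V) :
    (pottsMean2 q E J (fun _ => 0) f₀ f₁ R S).re ≤
      (pottsMean q E J (fun _ => 0) f₀ R).re *
        (pottsMean q E J (fun _ => 0) f₁ S).re :=
  pottsMean_negative_correlation_zero_field_general q E J hJ f₀ f₁ hf₀ hf₁ hdisj R S
end
end

section
/- (GKS inequalities for angular spins.) Let f : Q → ℂ be given by f(x) = e^{2πix/q}. Then for all R, S ⊆ V the Potts means ⟨f(σ)^R⟩, ⟨f(σ)^S⟩ and ⟨f(σ)^R f(σ)^S⟩ are real numbers, ⟨f(σ)^R⟩ ≥ 0, and ⟨f(σ)^R f(σ)^S⟩ ≥ ⟨f(σ)^R⟩ · ⟨f(σ)^S⟩. -/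
open Finset

noncomputable section

variable {V : Type*} [Fintype V] [DecidableEq V]

/-!
The Potts weight has the form `exp (∑ i, J i * 1[σ ∈ K i])` for additive subgroups `K i` of
`V → ℤ/q`: `σ x = σ y` for an edge, `σ v = 0` for a site, and `σ ↦ ∏ v ∈ R, f (σ v)` is a
character `ψ` of this group. Writing `exp (J * 1[σ ∈ K]) = 1 + (exp J - 1) * 1[σ ∈ K]` and
expanding the product (the Fortuin–Kasteleyn expansion), `∑ σ, weight σ * ψ σ` becomes a sum
over sets `T` of constraints of `∏ i ∈ T, (exp (J i) - 1)` times `∑ σ ∈ H T, ψ σ`, where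
`H T = ⨅ i ∈ T, K i`; by orthogonality of characters the latter is `|H T|` or `0`, according
as `ψ` is trivial on `H T` or not. This gives reality and nonnegativity. Since
`H (T ∪ U) = H T ⊓ H U`, `H T ⊔ H U ≤ H (T ∩ U)` and `|A| |B| = |A ⊔ B| |A ⊓ B|`, these terms
satisfy the hypothesis of the Ahlswede–Daykin four functions theorem, whose conclusion is the
second GKS inequality.
-/

theorem AddSubgroup.card_sup_mul_card_inf {G : Type*} [AddCommGroup G] (A B : AddSubgroup G) :
    Nat.card ↥(A ⊔ B) * Nat.card ↥(A ⊓ B) = Nat.card A * Nat.card B := by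
  have hA : Nat.card A = Nat.card ↥(A ⊓ B) * B.relIndex (A ⊔ B) := by
    rw [AddSubgroup.relIndex_sup_right, ← AddSubgroup.inf_relIndex_left,
      ← AddSubgroup.relIndex_bot_left, ← AddSubgroup.relIndex_bot_left,
      AddSubgroup.relIndex_mul_relIndex _ _ _ bot_le inf_le_left]
  have hAB : Nat.card ↥(A ⊔ B) = Nat.card B * B.relIndex (A ⊔ B) := by
    rw [← AddSubgroup.relIndex_bot_left, ← AddSubgroup.relIndex_bot_left,
      AddSubgroup.relIndex_mul_relIndex _ _ _ bot_le le_sup_right]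
  rw [hA, hAB]
  ring

namespace ConstraintModel

variable {G : Type*} [AddCommGroup G]

open scoped Classical in
/-- The closed form of `∑ σ ∈ H, ψ σ` given by orthogonality of characters. -/
def subgroupCharSum (ψ : AddChar G ℂ) (H : AddSubgroup G) : ℝ :=
  if ∀ σ ∈ H, ψ σ = 1 then Nat.card H else 0

theorem subgroupCharSum_nonneg (ψ : AddChar G ℂ) (H : AddSubgroup G) : 0 ≤ subgroupCharSum ψ H := by
  unfold subgroupCharSum
  positivity

theorem subgroupCharSum_one (H : AddSubgroup G) : subgroupCharSum 1 H = Nat.card H := by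
  simp [subgroupCharSum]

theorem subgroupCharSum_mul_le [Finite G] (ψ₁ ψ₂ : AddChar G ℂ) {A B C : AddSubgroup G}
    (hC : A ⊔ B ≤ C) :
    subgroupCharSum ψ₁ A * subgroupCharSum ψ₂ B ≤
      subgroupCharSum 1 C * subgroupCharSum (ψ₁ * ψ₂) (A ⊓ B) := by
  by_cases h : (∀ σ ∈ A, ψ₁ σ = 1) ∧ ∀ σ ∈ B, ψ₂ σ = 1
  · have hAB : ∀ σ ∈ A ⊓ B, (ψ₁ * ψ₂) σ = 1 := fun σ hσ => by
      simp [h.1 σ (AddSubgroup.mem_inf.1 hσ).1, h.2 σ (AddSubgroup.mem_inf.1 hσ).2]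
    rw [subgroupCharSum_one, subgroupCharSum, subgroupCharSum, subgroupCharSum, if_pos h.1,
      if_pos h.2, if_pos hAB]
    exact_mod_cast (AddSubgroup.card_sup_mul_card_inf A B).symm.trans_le
      (Nat.mul_le_mul_right _ (AddSubgroup.card_le_of_le hC))
  · have hzero : subgroupCharSum ψ₁ A * subgroupCharSum ψ₂ B = 0 := by
      rw [not_and_or] at h
      rcases h with h | h <;> simp [subgroupCharSum, h]
    rw [hzero]
    exact mul_nonneg (subgroupCharSum_nonneg _ _) (subgroupCharSum_nonneg _ _)

theorem sum_indicator_mul_char [Fintype G] (ψ : AddChar G ℂ) (H : AddSubgroup G)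
    [DecidablePred (· ∈ H)] :
    ∑ σ, ((if σ ∈ H then 1 else 0 : ℝ) : ℂ) * ψ σ = subgroupCharSum ψ H := by
  classical
  have hsum : ∑ σ, ((if σ ∈ H then 1 else 0 : ℝ) : ℂ) * ψ σ =
      ∑ σ : H, ψ.compAddMonoidHom H.subtype σ :=
    calc ∑ σ, ((if σ ∈ H then 1 else 0 : ℝ) : ℂ) * ψ σ
        = ∑ σ ∈ Finset.univ.filter (· ∈ H), ψ σ := by
          rw [Finset.sum_filter]
          exact Finset.sum_congr rfl fun σ _ => by split_ifs <;> simp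
      _ = ∑ σ : H, ψ σ := Finset.sum_subtype _ (by simp) ψ
  have htrivial : ψ.compAddMonoidHom H.subtype = 0 ↔ ∀ σ ∈ H, ψ σ = 1 := by
    simp [AddChar.ext_iff]
  rw [hsum, AddChar.sum_eq_ite, subgroupCharSum, Nat.card_eq_fintype_card]
  split_ifs <;> simp_all

variable {ι : Type*} (K : ι → AddSubgroup G) (J : ι → ℝ)

def constraintSubgroup (T : Finset ι) : AddSubgroup G := ⨅ i ∈ T, K i

theorem mem_constraintSubgroup {T : Finset ι} {σ : G} :
    σ ∈ constraintSubgroup K T ↔ ∀ i ∈ T, σ ∈ K i := by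
  simp [constraintSubgroup, AddSubgroup.mem_iInf]

theorem constraintSubgroup_anti : Antitone (constraintSubgroup K) :=
  fun _ _ hTU _ hσ => (mem_constraintSubgroup K).2 fun i hi =>
    (mem_constraintSubgroup K).1 hσ i (hTU hi)

theorem constraintSubgroup_union [DecidableEq ι] (T U : Finset ι) :
    constraintSubgroup K (T ∪ U) = constraintSubgroup K T ⊓ constraintSubgroup K U := by
  ext σ
  simp only [AddSubgroup.mem_inf, mem_constraintSubgroup, Finset.mem_union, or_imp, forall_and]

def fkWeight (ψ : AddChar G ℂ) (T : Finset ι) : ℝ :=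
  (∏ i ∈ T, (Real.exp (J i) - 1)) * subgroupCharSum ψ (constraintSubgroup K T)

theorem fkWeight_nonneg (hJ : 0 ≤ J) (ψ : AddChar G ℂ) (T : Finset ι) :
    0 ≤ fkWeight K J ψ T :=
  mul_nonneg (Finset.prod_nonneg fun i _ => sub_nonneg.2 (Real.one_le_exp (hJ i)))
    (subgroupCharSum_nonneg _ _)

theorem fkWeight_mul_le [DecidableEq ι] [Finite G] (hJ : 0 ≤ J) (ψ₁ ψ₂ : AddChar G ℂ)
    (T U : Finset ι) :
    fkWeight K J ψ₁ T * fkWeight K J ψ₂ U ≤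
      fkWeight K J 1 (T ⊓ U) * fkWeight K J (ψ₁ * ψ₂) (T ⊔ U) := by
  have hprod := Finset.prod_union_inter (s₁ := T) (s₂ := U) (f := fun i => Real.exp (J i) - 1)
  have hcard := subgroupCharSum_mul_le ψ₁ ψ₂ (A := constraintSubgroup K T)
    (B := constraintSubgroup K U) (sup_le (constraintSubgroup_anti K Finset.inter_subset_left)
    (constraintSubgroup_anti K Finset.inter_subset_right))
  rw [← constraintSubgroup_union] at hcard
  calc fkWeight K J ψ₁ T * fkWeight K J ψ₂ U
      = (∏ i ∈ T, (Real.exp (J i) - 1)) * (∏ i ∈ U, (Real.exp (J i) - 1)) *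
          (subgroupCharSum ψ₁ (constraintSubgroup K T) *
            subgroupCharSum ψ₂ (constraintSubgroup K U)) := by
        rw [fkWeight, fkWeight]; ring
    _ ≤ (∏ i ∈ T, (Real.exp (J i) - 1)) * (∏ i ∈ U, (Real.exp (J i) - 1)) *
          (subgroupCharSum 1 (constraintSubgroup K (T ∩ U)) *
            subgroupCharSum (ψ₁ * ψ₂) (constraintSubgroup K (T ∪ U))) :=
        mul_le_mul_of_nonneg_left hcard (mul_nonneg
          (Finset.prod_nonneg fun i _ => sub_nonneg.2 (Real.one_le_exp (hJ i)))
          (Finset.prod_nonneg fun i _ => sub_nonneg.2 (Real.one_le_exp (hJ i))))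
    _ = fkWeight K J 1 (T ⊓ U) * fkWeight K J (ψ₁ * ψ₂) (T ⊔ U) := by
        rw [fkWeight, fkWeight, ← hprod, Finset.inf_eq_inter, Finset.sup_eq_union]; ring

variable [Fintype ι]

open scoped Classical in
def weight (σ : G) : ℝ := Real.exp (∑ i, J i * if σ ∈ K i then 1 else 0)

open scoped Classical in
theorem weight_eq_sum (σ : G) :
    weight K J σ = ∑ T : Finset ι,
      (∏ i ∈ T, (Real.exp (J i) - 1)) * if σ ∈ constraintSubgroup K T then 1 else 0 := by
  have hfactor : ∀ i, Real.exp (J i * if σ ∈ K i then 1 else 0) =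
      1 + (Real.exp (J i) - 1) * if σ ∈ K i then 1 else 0 := by
    intro i
    split_ifs <;> simp
  simp only [weight, Real.exp_sum, hfactor, Finset.prod_one_add, Finset.powerset_univ,
    Finset.prod_mul_distrib, Finset.prod_boole, mem_constraintSubgroup]
  congr!

variable [Fintype G]

theorem sum_weight_mul_char (ψ : AddChar G ℂ) :
    ∑ σ, (weight K J σ : ℂ) * ψ σ = ((∑ T, fkWeight K J ψ T : ℝ) : ℂ) := by
  classical
  simp only [weight_eq_sum, Complex.ofReal_sum, Complex.ofReal_mul, Finset.sum_mul]
  rw [Finset.sum_comm]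
  refine Finset.sum_congr rfl fun T _ => ?_
  rw [fkWeight, Complex.ofReal_mul, ← sum_indicator_mul_char, Finset.mul_sum]
  exact Finset.sum_congr rfl fun σ _ => mul_assoc _ _ _

def charMean (ψ : AddChar G ℂ) : ℂ :=
  (∑ σ, (weight K J σ : ℂ) * ψ σ) / ∑ σ, (weight K J σ : ℂ)

theorem sum_fkWeight_one_eq : ∑ T, fkWeight K J 1 T = ∑ σ, weight K J σ := by
  have h := sum_weight_mul_char K J 1
  simp only [AddChar.one_apply, mul_one] at h
  exact_mod_cast h.symm

theorem charMean_eq (ψ : AddChar G ℂ) :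
    charMean K J ψ = ((∑ T, fkWeight K J ψ T) / ∑ T, fkWeight K J 1 T : ℝ) := by
  rw [charMean, sum_weight_mul_char, sum_fkWeight_one_eq]
  push_cast
  rfl

theorem sum_fkWeight_one_pos : 0 < ∑ T, fkWeight K J 1 T := by
  rw [sum_fkWeight_one_eq]
  exact Finset.sum_pos (fun σ _ => Real.exp_pos _) Finset.univ_nonempty

theorem charMean_im (ψ : AddChar G ℂ) : (charMean K J ψ).im = 0 := by
  rw [charMean_eq, Complex.ofReal_im]

theorem charMean_re_nonneg (hJ : 0 ≤ J) (ψ : AddChar G ℂ) : 0 ≤ (charMean K J ψ).re := by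
  rw [charMean_eq, Complex.ofReal_re]
  exact div_nonneg (Finset.sum_nonneg fun T _ => fkWeight_nonneg K J hJ ψ T)
    (sum_fkWeight_one_pos K J).le

theorem charMean_re_mul_le (hJ : 0 ≤ J) (ψ₁ ψ₂ : AddChar G ℂ) :
    (charMean K J ψ₁).re * (charMean K J ψ₂).re ≤ (charMean K J (ψ₁ * ψ₂)).re := by
  classical
  have hZ := sum_fkWeight_one_pos K J
  have hfkg := four_functions_theorem_univ (fkWeight K J ψ₁) (fkWeight K J ψ₂)
    (fkWeight K J 1) (fkWeight K J (ψ₁ * ψ₂)) (fkWeight_nonneg K J hJ ψ₁)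
    (fkWeight_nonneg K J hJ ψ₂) (fkWeight_nonneg K J hJ 1) (fkWeight_nonneg K J hJ (ψ₁ * ψ₂))
    (fkWeight_mul_le K J hJ ψ₁ ψ₂)
  simp only [charMean_eq, Complex.ofReal_re]
  rw [div_mul_div_comm, div_le_div_iff₀ (mul_pos hZ hZ) hZ]
  calc (∑ T, fkWeight K J ψ₁ T) * (∑ T, fkWeight K J ψ₂ T) * ∑ T, fkWeight K J 1 T
      ≤ (∑ T, fkWeight K J 1 T) * (∑ T, fkWeight K J (ψ₁ * ψ₂) T) * ∑ T, fkWeight K J 1 T :=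
        mul_le_mul_of_nonneg_right hfkg hZ.le
    _ = (∑ T, fkWeight K J (ψ₁ * ψ₂) T) * ((∑ T, fkWeight K J 1 T) * ∑ T, fkWeight K J 1 T) := by
        ring

end ConstraintModel

def AddChar.prodEval {W A M : Type*} [AddMonoid A] [CommMonoid M] (χ : AddChar A M)
    (R : Finset W) : AddChar (W → A) M :=
  ∏ v ∈ R, χ.compAddMonoidHom (Pi.evalAddMonoidHom (fun _ => A) v)

theorem AddChar.prodEval_apply {W A M : Type*} [AddMonoid A] [CommMonoid M] (χ : AddChar A M)
    (R : Finset W) (σ : W → A) : χ.prodEval R σ = ∏ v ∈ R, χ (σ v) := by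
  simp [AddChar.prodEval, AddChar.prod_apply]

def angularChar (q : ℕ) [NeZero q] : AddChar (Fin q) ℂ where
  toFun x := Complex.exp (2 * Real.pi * Complex.I * (x : ℕ) / q)
  map_zero_eq_one' := by simp
  map_add_eq_mul' a b := by
    have hq : (q : ℂ) ≠ 0 := Nat.cast_ne_zero.2 (NeZero.ne q)
    have hdiv : (((a + b : ℕ) % q : ℕ) : ℂ) = (a + b : ℕ) - q * ((a + b : ℕ) / q : ℕ) := by
      rw [eq_sub_iff_add_eq, ← Nat.cast_mul, ← Nat.cast_add, Nat.mod_add_div]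
    rw [← Complex.exp_add, Complex.exp_eq_exp_iff_exists_int, Fin.val_add, hdiv]
    refine ⟨-((a + b : ℕ) / q : ℕ), ?_⟩
    field_simp
    simp only [Int.cast_neg, Int.cast_natCast, Nat.cast_add]
    ring

theorem coe_angularChar (q : ℕ) [NeZero q] :
    ⇑(angularChar q) = fun x : Fin q => Complex.exp (2 * Real.pi * Complex.I * (x : ℕ) / q) :=
  rfl

section PottsConstraints

variable {W A : Type*} [AddCommGroup A]

def edgeSubgroup (e : Sym2 W) : AddSubgroup (W → A) :=
  Sym2.lift ⟨fun a b => (Pi.evalAddMonoidHom (fun _ => A) a - Pi.evalAddMonoidHom _ b).ker,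
    fun a b => by ext σ; simp [sub_eq_zero, eq_comm]⟩ e

theorem mem_edgeSubgroup_mk {a b : W} {σ : W → A} : σ ∈ edgeSubgroup s(a, b) ↔ σ a = σ b := by
  simp [edgeSubgroup, sub_eq_zero]

def siteSubgroup (v : W) : AddSubgroup (W → A) := (Pi.evalAddMonoidHom (fun _ => A) v).ker

theorem mem_siteSubgroup {v : W} {σ : W → A} : σ ∈ siteSubgroup v ↔ σ v = 0 := by
  simp [siteSubgroup]

def pottsConstraint (E : Finset (Sym2 W)) : E ⊕ W → AddSubgroup (W → A) :=
  Sum.elim (fun e => edgeSubgroup e.1) siteSubgroup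

def pottsCoupling (E : Finset (Sym2 W)) (J : Sym2 W → ℝ) (h : W → ℝ) : E ⊕ W → ℝ :=
  Sum.elim (fun e => J e) h

theorem pottsCoupling_nonneg {E : Finset (Sym2 W)} {J : Sym2 W → ℝ} {h : W → ℝ}
    (hJ : ∀ e ∈ E, 0 ≤ J e) (hh : ∀ v, 0 ≤ h v) : 0 ≤ pottsCoupling E J h := by
  rintro (e | v)
  exacts [hJ e e.2, hh v]

end PottsConstraints

section PottsWeight

variable {W : Type*} [Fintype W] (q : ℕ) [NeZero q] (E : Finset (Sym2 W)) (J : Sym2 W → ℝ)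
  (h : W → ℝ)

theorem pottsWeight_eq_weight (σ : W → Fin q) :
    pottsWeight q E J h σ =
      ConstraintModel.weight (pottsConstraint E) (pottsCoupling E J h) σ := by
  rw [pottsWeight, ConstraintModel.weight, Fintype.sum_sum_type, ← Finset.sum_coe_sort E]
  congr 2
  · refine Finset.sum_congr rfl fun ⟨e, _⟩ _ => ?_
    induction e using Sym2.ind with
    | _ a b => simp [pottsConstraint, pottsCoupling, edgeDelta, mem_edgeSubgroup_mk]
  · refine Finset.sum_congr rfl fun v _ => ?_
    simp [pottsConstraint, pottsCoupling, mem_siteSubgroup]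

end PottsWeight

section PottsMeans

variable (q : ℕ) [NeZero q] (E : Finset (Sym2 V)) (J : Sym2 V → ℝ) (h : V → ℝ)

theorem pottsMean_eq_charMean (χ : AddChar (Fin q) ℂ) (R : Finset V) :
    pottsMean q E J h χ R =
      ConstraintModel.charMean (pottsConstraint E) (pottsCoupling E J h) (χ.prodEval R) := by
  simp only [pottsMean, pottsPMF, pottsZ, ConstraintModel.charMean, pottsWeight_eq_weight,
    AddChar.prodEval_apply, Complex.ofReal_div, Complex.ofReal_sum, Finset.sum_div]
  exact Finset.sum_congr rfl fun σ _ => div_mul_eq_mul_div _ _ _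

theorem pottsMean2_eq_charMean (χ₀ χ₁ : AddChar (Fin q) ℂ) (R S : Finset V) :
    pottsMean2 q E J h χ₀ χ₁ R S =
      ConstraintModel.charMean (pottsConstraint E) (pottsCoupling E J h)
        (χ₀.prodEval R * χ₁.prodEval S) := by
  simp only [pottsMean2, pottsPMF, pottsZ, ConstraintModel.charMean, pottsWeight_eq_weight,
    AddChar.mul_apply, AddChar.prodEval_apply, Complex.ofReal_div, Complex.ofReal_sum,
    Finset.sum_div]
  exact Finset.sum_congr rfl fun σ _ => div_mul_eq_mul_div _ _ _

end PottsMeans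

theorem gks_angular_spins_general
    (q : ℕ) [NeZero q]
    (E : Finset (Sym2 V))
    (J : Sym2 V → ℝ) (hJ : ∀ e ∈ E, 0 ≤ J e)
    (h : V → ℝ) (hh : ∀ v : V, 0 ≤ h v)
    (R S : Finset V) :
    (pottsMean q E J h (fun x : Fin q =>
        Complex.exp (2 * Real.pi * Complex.I * (x : ℕ) / q)) R).im = 0 ∧
    (pottsMean q E J h (fun x : Fin q =>
        Complex.exp (2 * Real.pi * Complex.I * (x : ℕ) / q)) S).im = 0 ∧
    (pottsMean2 q E J h (fun x : Fin q =>
        Complex.exp (2 * Real.pi * Complex.I * (x : ℕ) / q))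
      (fun x : Fin q => Complex.exp (2 * Real.pi * Complex.I * (x : ℕ) / q)) R S).im = 0 ∧
    0 ≤ (pottsMean q E J h (fun x : Fin q =>
        Complex.exp (2 * Real.pi * Complex.I * (x : ℕ) / q)) R).re ∧
    (pottsMean q E J h (fun x : Fin q =>
        Complex.exp (2 * Real.pi * Complex.I * (x : ℕ) / q)) R).re *
      (pottsMean q E J h (fun x : Fin q =>
        Complex.exp (2 * Real.pi * Complex.I * (x : ℕ) / q)) S).re ≤
    (pottsMean2 q E J h (fun x : Fin q =>
        Complex.exp (2 * Real.pi * Complex.I * (x : ℕ) / q))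
      (fun x : Fin q => Complex.exp (2 * Real.pi * Complex.I * (x : ℕ) / q)) R S).re := by
  have hR := pottsMean_eq_charMean q E J h (angularChar q) R
  have hS := pottsMean_eq_charMean q E J h (angularChar q) S
  have hRS := pottsMean2_eq_charMean q E J h (angularChar q) (angularChar q) R S
  rw [coe_angularChar] at hR hS hRS
  have hcoupling := pottsCoupling_nonneg hJ hh
  rw [hR, hS, hRS]
  exact ⟨ConstraintModel.charMean_im _ _ _, ConstraintModel.charMean_im _ _ _,
    ConstraintModel.charMean_im _ _ _, ConstraintModel.charMean_re_nonneg _ _ hcoupling _,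
    ConstraintModel.charMean_re_mul_le _ _ hcoupling _ _⟩

/-- GKS inequalities for angular spins: for `f(x) = e^{2πix/q}`, the means
`⟨f(σ)^R⟩`, `⟨f(σ)^S⟩`, `⟨f(σ)^R f(σ)^S⟩` are real, `⟨f(σ)^R⟩ ≥ 0`, and
`⟨f(σ)^R f(σ)^S⟩ ≥ ⟨f(σ)^R⟩ ⟨f(σ)^S⟩`. -/
theorem gks_angular_spins
    (q : ℕ) [NeZero q] (hq : 2 ≤ q)
    (E : Finset (Sym2 V)) (hE : ∀ e ∈ E, ¬ e.IsDiag)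
    (J : Sym2 V → ℝ) (hJ : ∀ e ∈ E, 0 ≤ J e)
    (h : V → ℝ) (hh : ∀ v : V, 0 ≤ h v)
    (R S : Finset V) :
    (pottsMean q E J h (fun x : Fin q =>
        Complex.exp (2 * Real.pi * Complex.I * (x : ℕ) / q)) R).im = 0 ∧
    (pottsMean q E J h (fun x : Fin q =>
        Complex.exp (2 * Real.pi * Complex.I * (x : ℕ) / q)) S).im = 0 ∧
    (pottsMean2 q E J h (fun x : Fin q =>
        Complex.exp (2 * Real.pi * Complex.I * (x : ℕ) / q))
      (fun x : Fin q => Complex.exp (2 * Real.pi * Complex.I * (x : ℕ) / q)) R S).im = 0 ∧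
    0 ≤ (pottsMean q E J h (fun x : Fin q =>
        Complex.exp (2 * Real.pi * Complex.I * (x : ℕ) / q)) R).re ∧
    (pottsMean q E J h (fun x : Fin q =>
        Complex.exp (2 * Real.pi * Complex.I * (x : ℕ) / q)) R).re *
      (pottsMean q E J h (fun x : Fin q =>
        Complex.exp (2 * Real.pi * Complex.I * (x : ℕ) / q)) S).re ≤
    (pottsMean2 q E J h (fun x : Fin q =>
        Complex.exp (2 * Real.pi * Complex.I * (x : ℕ) / q))
      (fun x : Fin q => Complex.exp (2 * Real.pi * Complex.I * (x : ℕ) / q)) R S).re :=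
  gks_angular_spins_general q E J hJ h hh R S
end
end
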